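/- arXiv:0706.3937 — 11 statements merged into one kernel-verified Lean document; each statement's English description precedes it below -/
import Mathlib

section
/- A surjective function f : X → Y from a uniform space X has the uniqueness of chain lifts property (for every entourage E of X there is an entourage F of X such that any two F-chains with the same image under f and the same origin are equal) if and only if there exists an entourage E₀ of X transverse to f, i.e. (x,y) ∈ E₀ and f(x) = f(y) implies x = y. -/
open UniformSpace Filter Function
open scoped Uniformity

universe u v

variable {X : Type u} {Y : Type v}

/-- An `E`-chain: consecutive pairs belong to `E`. -/
def IsEChain (E : Set (X × X)) (l : List X) : Prop :=
  l.Chain' fun a b => (a, b) ∈ E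

/-- The image `f(E)` of a relation under `f`. -/
def fimg (f : X → Y) (E : Set (X × X)) : Set (Y × Y) := Prod.map f f '' E

/- If two `F`-neighbours of a common point are always `E₀`-close and `E₀` is transverse to `f`,
an `F`-chain is determined step by step by its origin and its image: the next points of two chains
with the same image are `F`-neighbours of the same point with the same value, hence equal.
Conversely, comparing the chains `[x, x]` and `[x, y]` shows that an entourage over which chain
lifts are unique is itself transverse. -/

def IsTransverse (f : X → Y) (E₀ : Set (X × X)) : Prop :=
  ∀ x y : X, (x, y) ∈ E₀ → f x = f y → x = y

def ChainLiftsUnique (f : X → Y) (F : Set (X × X)) : Prop :=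
  ∀ α β : List X, IsEChain F α → IsEChain F β → α.head? = β.head? → α.map f = β.map f → α = β

section

variable {f : X → Y} {E₀ F : Set (X × X)}

theorem ChainLiftsUnique.isTransverse (hrefl : ∀ x, (x, x) ∈ F) (h : ChainLiftsUnique f F) :
    IsTransverse f F := by
  intro x y hxy hfxy
  have hxx : IsEChain F [x, x] := List.isChain_pair.mpr (hrefl x)
  have hxy' : IsEChain F [x, y] := List.isChain_pair.mpr hxy
  simpa using h [x, x] [x, y] hxx hxy' rfl (by simp [hfxy])

theorem IsTransverse.tail_eq_of_isEChain_cons (htr : IsTransverse f E₀)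
    (hF : ∀ {x a b}, (x, a) ∈ F → (x, b) ∈ F → (a, b) ∈ E₀) {x : X} {α β : List X}
    (hα : IsEChain F (x :: α)) (hβ : IsEChain F (x :: β)) (hmap : α.map f = β.map f) :
    α = β := by
  induction α generalizing x β with
  | nil => exact (List.map_eq_nil_iff.mp hmap.symm).symm
  | cons a α ih =>
    obtain _ | ⟨b, β⟩ := β
    · simp at hmap
    simp only [List.map_cons, List.cons.injEq] at hmap
    obtain ⟨hfab, hmap⟩ := hmap
    obtain ⟨hxa, hα⟩ := List.isChain_cons_cons.mp hα
    obtain ⟨hxb, hβ⟩ := List.isChain_cons_cons.mp hβ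
    obtain rfl : a = b := htr a b (hF hxa hxb) hfab
    rw [ih hα hβ hmap]

theorem IsTransverse.chainLiftsUnique (htr : IsTransverse f E₀)
    (hF : ∀ {x a b}, (x, a) ∈ F → (x, b) ∈ F → (a, b) ∈ E₀) : ChainLiftsUnique f F := by
  rintro (_ | ⟨x, α⟩) (_ | ⟨y, β⟩) hα hβ hhead hmap
  · rfl
  · simp at hhead
  · simp at hhead
  obtain rfl : x = y := Option.some.inj hhead
  rw [htr.tail_eq_of_isEChain_cons hF hα hβ (List.cons_eq_cons.mp hmap).2]

end

theorem exists_mem_uniformity_of_common_neighbour [UniformSpace X] {E₀ : Set (X × X)}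
    (hE₀ : E₀ ∈ 𝓤 X) : ∃ F ∈ 𝓤 X, ∀ {x a b}, (x, a) ∈ F → (x, b) ∈ F → (a, b) ∈ E₀ := by
  obtain ⟨F, hF, hsymm, hcomp⟩ := comp_symm_mem_uniformity_sets hE₀
  exact ⟨F, hF, fun hxa hxb => hcomp (SetRel.prodMk_mem_comp (SetRel.symm F hxa) hxb)⟩

theorem uniqueness_of_chain_lifts_iff_transverse_entourage_general
    [UniformSpace X] (f : X → Y) :
    (∀ E ∈ 𝓤 X, ∃ F ∈ 𝓤 X, ∀ α β : List X,
        IsEChain F α → IsEChain F β → α.head? = β.head? → α.map f = β.map f → α = β) ↔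
      (∃ E₀ ∈ 𝓤 X, ∀ x y : X, (x, y) ∈ E₀ → f x = f y → x = y) := by
  change (∀ E ∈ 𝓤 X, ∃ F ∈ 𝓤 X, ChainLiftsUnique f F) ↔ ∃ E₀ ∈ 𝓤 X, IsTransverse f E₀
  constructor
  · intro h
    obtain ⟨F, hF, huniq⟩ := h Set.univ univ_mem
    exact ⟨F, hF, huniq.isTransverse fun _ => refl_mem_uniformity hF⟩
  · rintro ⟨E₀, hE₀, htr⟩ - -
    obtain ⟨F, hF, hFE₀⟩ := exists_mem_uniformity_of_common_neighbour hE₀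
    exact ⟨F, hF, htr.chainLiftsUnique hFE₀⟩

/-- A surjective function from a uniform space has the uniqueness of chain lifts
property iff it admits a transverse entourage. -/
theorem uniqueness_of_chain_lifts_iff_transverse_entourage
    [UniformSpace X] (f : X → Y) (hf : Function.Surjective f) :
    (∀ E ∈ 𝓤 X, ∃ F ∈ 𝓤 X, ∀ α β : List X,
        IsEChain F α → IsEChain F β → α.head? = β.head? → α.map f = β.map f → α = β) ↔
      (∃ E₀ ∈ 𝓤 X, ∀ x y : X, (x, y) ∈ E₀ → f x = f y → x = y) :=
  uniqueness_of_chain_lifts_iff_transverse_entourage_general f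
end

section
/- If a surjective function f : X → Y from a uniform space X to a set Y has the chain lifting property, then the family { f(E) : E an entourage of X } is a base of a uniform structure on Y; that is, for every entourage E of X there is an entourage F of X with f(F)∘f(F) ⊆ f(E) (where composition is relational composition), and moreover f is uniformly open with respect to this structure. -/
open UniformSpace Filter Function
open scoped Uniformity

universe u v

variable {X : Type u} {Y : Type v}

/-!
Lifting a two-step `f(F)`-chain `f x, b, c` from `x` gives a two-step `E'`-chain from `x`
to a preimage of `c`, so `f(F) ∘ f(F) ⊆ f(E' ∘ E') ⊆ f(E)` once `E' ∘ E' ⊆ E`. Lifting a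
one-step chain `f x, y` is uniform openness.
-/

def LiftsChains (f : X → Y) (E F : Set (X × X)) : Prop :=
  ∀ x : X, ∀ l : List Y, IsEChain (fimg f F) l → l.head? = some (f x) →
    ∃ l' : List X, IsEChain E l' ∧ l'.head? = some x ∧ l'.map f = l

namespace LiftsChains

variable {f : X → Y} {E F : Set (X × X)}

theorem exists_lift_cons (h : LiftsChains f E F) {x : X} {l : List Y}
    (hl : IsEChain (fimg f F) (f x :: l)) :
    ∃ l' : List X, IsEChain E (x :: l') ∧ l'.map f = l := by
  obtain ⟨l', hl', hhead, hmap⟩ := h x _ hl rfl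
  obtain ⟨z, l'', rfl, -, htail⟩ := List.map_eq_cons_iff.1 hmap
  obtain rfl : z = x := Option.some.inj hhead
  exact ⟨l'', hl', htail⟩

theorem ball_fimg_subset (h : LiftsChains f E F) (x : X) :
    {y : Y | (f x, y) ∈ fimg f F} ⊆ f '' {z : X | (x, z) ∈ E} := by
  intro y hy
  obtain ⟨l', hl', hmap⟩ := h.exists_lift_cons (List.isChain_pair.2 hy)
  obtain ⟨z, rfl, hz⟩ := List.map_eq_singleton_iff.1 hmap
  exact ⟨z, List.isChain_pair.1 hl', hz⟩

theorem comp_fimg_subset (h : LiftsChains f E F) :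
    SetRel.comp (fimg f F) (fimg f F) ⊆ fimg f (SetRel.comp E E) := by
  rintro ⟨a, c⟩ ⟨b, ⟨⟨x, x'⟩, hxx', hab⟩, hbc⟩
  simp only [Prod.map, Prod.mk.injEq] at hab
  obtain ⟨rfl, rfl⟩ := hab
  have hchain : IsEChain (fimg f F) [f x, f x', c] :=
    List.isChain_cons_cons.2 ⟨⟨(x, x'), hxx', rfl⟩, List.isChain_pair.2 hbc⟩
  obtain ⟨l', hl', hmap⟩ := h.exists_lift_cons hchain
  obtain ⟨z, l'', rfl, -, htail⟩ := List.map_eq_cons_iff.1 hmap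
  obtain ⟨z', rfl, rfl⟩ := List.map_eq_singleton_iff.1 htail
  obtain ⟨hxz, hzz'⟩ := List.isChain_cons_cons.1 hl'
  exact ⟨(x, z'), ⟨z, hxz, List.isChain_pair.1 hzz'⟩, rfl⟩

end LiftsChains

theorem chain_lifting_generates_and_uniformly_open_general
    [UniformSpace X] (f : X → Y)
    (hlift : ∀ E ∈ 𝓤 X, ∃ F ∈ 𝓤 X, ∀ x : X, ∀ l : List Y,
        IsEChain (fimg f F) l → l.head? = some (f x) →
        ∃ l' : List X, IsEChain E l' ∧ l'.head? = some x ∧ l'.map f = l) :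
    (∀ E ∈ 𝓤 X, ∃ F ∈ 𝓤 X, SetRel.comp (fimg f F) (fimg f F) ⊆ fimg f E) ∧
      (∀ D ∈ 𝓤 X, ∃ G ∈ 𝓤 X, ∀ x : X,
        {y : Y | (f x, y) ∈ fimg f G} ⊆ f '' {z : X | (x, z) ∈ D}) := by
  refine ⟨fun E hE => ?_, fun D hD => ?_⟩
  · obtain ⟨E', hE', hE'E⟩ := comp_mem_uniformity_sets hE
    obtain ⟨F, hF, hFE'⟩ := hlift E' hE'
    exact ⟨F, hF, (LiftsChains.comp_fimg_subset hFE').trans (Set.image_mono hE'E)⟩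
  · obtain ⟨G, hG, hGD⟩ := hlift D hD
    exact ⟨G, hG, LiftsChains.ball_fimg_subset hGD⟩

/-- If a surjective `f` from a uniform space has the chain lifting property, then the
family `f(E)` is a base of a uniform structure on `Y` and `f` is uniformly open
with respect to it. -/
theorem chain_lifting_generates_and_uniformly_open
    [UniformSpace X] (f : X → Y) (hf : Function.Surjective f)
    (hlift : ∀ E ∈ 𝓤 X, ∃ F ∈ 𝓤 X, ∀ x : X, ∀ l : List Y,
        IsEChain (fimg f F) l → l.head? = some (f x) →
        ∃ l' : List X, IsEChain E l' ∧ l'.head? = some x ∧ l'.map f = l) :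
    (∀ E ∈ 𝓤 X, ∃ F ∈ 𝓤 X, SetRel.comp (fimg f F) (fimg f F) ⊆ fimg f E) ∧
      (∀ D ∈ 𝓤 X, ∃ G ∈ 𝓤 X, ∀ x : X,
        {y : Y | (f x, y) ∈ fimg f G} ⊆ f '' {z : X | (x, z) ∈ D}) :=
  chain_lifting_generates_and_uniformly_open_general f hlift
end

section
/- Let f : X → Y be a function of sets, E a symmetric subset of X×X containing the diagonal. If the induced simplicial map f_E : R(X,E) → R(Y,f(E)) between Rips complexes is a covering map, then E evenly covers f(E), i.e. for every x ∈ X the ball B(x,E) is mapped by f bijectively onto B(f(x),f(E)). -/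
open UniformSpace Filter Function
open scoped Uniformity

universe u v

variable {X : Type u} {Y : Type v}

theorem isEChain_pair {E : Set (X × X)} {a b : X} : IsEChain E [a, b] ↔ (a, b) ∈ E :=
  List.isChain_pair

theorem map_mem_fimg (f : X → Y) {E : Set (X × X)} {a b : X} (h : (a, b) ∈ E) :
    (f a, f b) ∈ fimg f E :=
  ⟨(a, b), h, rfl⟩

theorem existsUnique_edge_lift {f : X → Y} {E : Set (X × X)} {x : X}
    (hlift : ∀ l : List Y, IsEChain (fimg f E) l → l.head? = some (f x) →
        ∃! l' : List X, IsEChain E l' ∧ l'.head? = some x ∧ l'.map f = l)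
    {z : Y} (hz : (f x, z) ∈ fimg f E) :
    ∃! y : X, (x, y) ∈ E ∧ f y = z := by
  obtain ⟨l', ⟨hchain, hhead, hmap⟩, huniq⟩ := hlift [f x, z] (isEChain_pair.2 hz) rfl
  simp only [List.map_eq_cons_iff, List.map_eq_nil_iff] at hmap
  obtain ⟨a, _, rfl, -, y, _, rfl, rfl, rfl⟩ := hmap
  obtain rfl : x = a := (Option.some.inj hhead).symm
  refine ⟨y, ⟨isEChain_pair.1 hchain, rfl⟩, ?_⟩
  rintro y' ⟨hy', hfy'⟩
  simpa using huniq [x, y'] ⟨isEChain_pair.2 hy', rfl, by simp [hfy']⟩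

theorem evenly_covers_of_rips_covering_general
    (f : X → Y) (E : Set (X × X))
    (hcov : ∀ x : X, ∀ l : List Y, IsEChain (fimg f E) l → l.head? = some (f x) →
        ∃! l' : List X, IsEChain E l' ∧ l'.head? = some x ∧ l'.map f = l) :
    ∀ x : X, Set.BijOn f {y : X | (x, y) ∈ E} {z : Y | (f x, z) ∈ fimg f E} := by
  intro x
  refine ⟨fun y hy => map_mem_fimg f hy, ?_, ?_⟩
  · intro y₁ hy₁ y₂ hy₂ hf
    exact (existsUnique_edge_lift (hcov x) (map_mem_fimg f hy₁)).unique ⟨hy₁, rfl⟩ ⟨hy₂, hf.symm⟩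
  · intro z hz
    obtain ⟨y, ⟨hy, rfl⟩, -⟩ := existsUnique_edge_lift (hcov x) hz
    exact ⟨y, hy, rfl⟩

/-- If the induced simplicial map `f_E : R(X,E) → R(Y,f(E))` is a covering map
(formalized via unique lifting of edge-paths starting at a given vertex), then `E`
evenly covers `f(E)`. -/
theorem evenly_covers_of_rips_covering
    (f : X → Y) (E : Set (X × X))
    (hsym : ∀ x y : X, (x, y) ∈ E → (y, x) ∈ E) (hrefl : ∀ x : X, (x, x) ∈ E)
    (hcov : ∀ x : X, ∀ l : List Y, IsEChain (fimg f E) l → l.head? = some (f x) →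
        ∃! l' : List X, IsEChain E l' ∧ l'.head? = some x ∧ l'.map f = l) :
    ∀ x : X, Set.BijOn f {y : X | (x, y) ∈ E} {z : Y | (f x, z) ∈ fimg f E} :=
  evenly_covers_of_rips_covering_general f E hcov
end

section
/- Let f : X → Y be a function of sets and E, F symmetric reflexive relations on X with E∘E ⊆ F. If F evenly covers f(F) (i.e. f maps B(x,F) bijectively onto B(f(x),f(F)) for each x) and B(x,E) is mapped by f bijectively onto B(f(x),f(E)) for each x ∈ X, then every simplex of R(Y,f(E)) containing a vertex f(x) has a unique lift to a simplex of R(X,E) containing x. -/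
open UniformSpace Filter Function
open scoped Uniformity

universe u v

variable {X : Type u} {Y : Type v}

/-! The lift of `Δ` is `B(x,E) ∩ f⁻¹(Δ)`: it is the only candidate because `f` is injective on
`B(x,E)`, and it is an `E`-simplex because two of its points are `F`-close (as `E ∘ E ⊆ F`), and
`F`-close points with `f(E)`-close images are `E`-close, by injectivity of `f` on `B(a,F) ⊇ B(a,E)`. -/

theorem subset_of_refl_of_comp_subset {E F : Set (X × X)} (hErefl : ∀ x : X, (x, x) ∈ E)
    (hEF : SetRel.comp E E ⊆ F) : E ⊆ F :=
  fun ⟨a, _⟩ hab => hEF ⟨a, hErefl a, hab⟩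

theorem mem_of_mem_of_map_mem_fimg {f : X → Y} {E F : Set (X × X)} (hEF : E ⊆ F) {a b : X}
    (hF : Set.InjOn f {y : X | (a, y) ∈ F})
    (hE : Set.SurjOn f {y : X | (a, y) ∈ E} {z : Y | (f a, z) ∈ fimg f E})
    (habF : (a, b) ∈ F) (habE : (f a, f b) ∈ fimg f E) : (a, b) ∈ E := by
  obtain ⟨c, hac, hfc⟩ := hE habE
  rwa [hF habF (hEF hac) hfc.symm]

theorem unique_simplex_lift_general
    (f : X → Y) (E F : Set (X × X))
    (hEsym : ∀ x y : X, (x, y) ∈ E → (y, x) ∈ E) (hErefl : ∀ x : X, (x, x) ∈ E)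
    (hEF : SetRel.comp E E ⊆ F)
    (hF : ∀ x : X, Set.BijOn f {y : X | (x, y) ∈ F} {z : Y | (f x, z) ∈ fimg f F})
    (hE : ∀ x : X, Set.BijOn f {y : X | (x, y) ∈ E} {z : Y | (f x, z) ∈ fimg f E}) :
    ∀ (x : X) (Δ : Finset Y), f x ∈ Δ → (∀ a ∈ Δ, ∀ b ∈ Δ, (a, b) ∈ fimg f E) →
      ∃! Δ' : Finset X, x ∈ Δ' ∧ (∀ a ∈ Δ', ∀ b ∈ Δ', (a, b) ∈ E) ∧
        Set.BijOn f (↑Δ' : Set X) (↑Δ : Set Y) := by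
  intro x Δ hxΔ hΔ
  have hlift : Set.BijOn f ({y | (x, y) ∈ E} ∩ f ⁻¹' Δ) Δ :=
    (hE x).subset_right fun z hz => hΔ _ hxΔ z hz
  have hfin : ({y | (x, y) ∈ E} ∩ f ⁻¹' Δ).Finite :=
    .of_finite_image (by rw [hlift.image_eq]; exact Δ.finite_toSet) hlift.injOn
  refine ⟨hfin.toFinset, ⟨?_, ?_, by simpa using hlift⟩, ?_⟩
  · simpa using ⟨hErefl x, hxΔ⟩
  · simp only [Set.Finite.mem_toFinset]
    rintro a ⟨hxa, hfa⟩ b ⟨hxb, hfb⟩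
    exact mem_of_mem_of_map_mem_fimg (subset_of_refl_of_comp_subset hErefl hEF) (hF a).injOn
      (hE a).surjOn (hEF ⟨x, hEsym x a hxa, hxb⟩) (hΔ _ hfa _ hfb)
  · rintro Δ'' ⟨hx'', hE'', hbij''⟩
    apply Finset.coe_injective
    rw [Set.Finite.coe_toFinset, Set.inter_comm, ← hbij''.image_eq,
      (hE x).injOn.preimage_image_inter fun a ha => hE'' x hx'' a ha]

/-- Unique lifting of simplices of the Rips complex for evenly covering relations. -/
theorem unique_simplex_lift
    (f : X → Y) (E F : Set (X × X))
    (hEsym : ∀ x y : X, (x, y) ∈ E → (y, x) ∈ E) (hErefl : ∀ x : X, (x, x) ∈ E)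
    (hFsym : ∀ x y : X, (x, y) ∈ F → (y, x) ∈ F) (hFrefl : ∀ x : X, (x, x) ∈ F)
    (hEF : SetRel.comp E E ⊆ F)
    (hF : ∀ x : X, Set.BijOn f {y : X | (x, y) ∈ F} {z : Y | (f x, z) ∈ fimg f F})
    (hE : ∀ x : X, Set.BijOn f {y : X | (x, y) ∈ E} {z : Y | (f x, z) ∈ fimg f E}) :
    ∀ (x : X) (Δ : Finset Y), f x ∈ Δ → (∀ a ∈ Δ, ∀ b ∈ Δ, (a, b) ∈ fimg f E) →
      ∃! Δ' : Finset X, x ∈ Δ' ∧ (∀ a ∈ Δ', ∀ b ∈ Δ', (a, b) ∈ E) ∧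
        Set.BijOn f (↑Δ' : Set X) (↑Δ : Set Y) :=
  unique_simplex_lift_general f E F hEsym hErefl hEF hF hE
end

section
/- Let X be a path-connected uniform space and x₀ ∈ X, and let X̃ be the set of homotopy-rel-endpoints classes of paths in X starting at x₀, with the basic uniform structure generated by the sets E* (pairs ([α],[β]) such that α⁻¹∗β is homotopic rel endpoints to a path contained in some ball B(z,E)). Then the endpoint map π_X : X̃ → X generates the uniform structure of X if and only if X is uniformly locally path-connected: for each entourage E of X there is an entourage F such that any two points of B(x,F) can be joined by a path in B(x,E), for every x ∈ X. -/
/-!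
Since `α⁻¹ ∗ (α ∗ γ)` is homotopic to `γ` and every point is joined to `x₀` by some path, `π_X(E*)`
is exactly the set of pairs of points joined by a path inside some `E`-ball. Such pairs lie in
`E⁻¹ ○ E`, so the sets `π_X(E*)` are always small; they are entourages precisely when small balls
are joined by paths in slightly larger balls, i.e. when `X` is uniformly locally path-connected.
-/

open UniformSpace Filter Function
open scoped Uniformity Topology

universe u

variable {X : Type u}

/-- A path lies in the ball `B(z,E)` for some `z ∈ X`. -/
def InBall {X : Type u} [TopologicalSpace X] (E : Set (X × X)) {a b : X} (γ : Path a b) : Prop :=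
  ∃ z : X, ∀ t, (z, γ t) ∈ E

/-- The space `X̃` of homotopy-rel-endpoints classes of paths starting at `x₀`. -/
def PTilde (X : Type u) [UniformSpace X] (x₀ : X) : Type u :=
  Σ y : X, Path.Homotopic.Quotient x₀ y

/-- The basic entourage `E*` on `X̃`: pairs `([α],[β])` such that `α⁻¹∗β` is homotopic
rel endpoints to a path contained in some ball `B(z,E)`. -/
def EstarP [UniformSpace X] (x₀ : X) (E : Set (X × X)) :
    Set (PTilde X x₀ × PTilde X x₀) :=
  { q | ∃ (α : Path x₀ q.1.1) (β : Path x₀ q.2.1) (γ : Path q.1.1 q.2.1),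
      q.1.2 = Quotient.mk (Path.Homotopic.setoid x₀ q.1.1) α ∧
      q.2.2 = Quotient.mk (Path.Homotopic.setoid x₀ q.2.1) β ∧
      InBall E γ ∧ (α.symm.trans β).Homotopic γ }

/-- The image under the endpoint map `π_X : X̃ → X` of the entourage `E*`. -/
def piEstarP [UniformSpace X] (x₀ : X) (E : Set (X × X)) : Set (X × X) :=
  (fun q : PTilde X x₀ × PTilde X x₀ => (q.1.1, q.2.1)) '' EstarP x₀ E

open Set
open scoped SetRel

def UniformlyLocallyPathConnected (X : Type u) [UniformSpace X] : Prop :=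
  ∀ E ∈ 𝓤 X, ∃ F ∈ 𝓤 X, ∀ x y z : X, (x, y) ∈ F → (x, z) ∈ F →
    ∃ γ : Path y z, ∀ t, (x, γ t) ∈ E

theorem Path.Homotopic.symm_trans_trans_cancel [TopologicalSpace X] {x₀ x₁ x₂ : X}
    (p : Path x₀ x₁) (q : Path x₁ x₂) : (p.symm.trans (p.trans q)).Homotopic q :=
  ((trans_assoc _ _ _).symm.trans ((symm_trans p).hcomp (refl q))).trans (refl_trans q)

theorem InBall.mem_inv_comp [TopologicalSpace X] {E : SetRel X X} {a b : X} {γ : Path a b}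
    (h : InBall E γ) (s t : unitInterval) : (γ s, γ t) ∈ E.inv ○ E :=
  let ⟨_, hz⟩ := h
  SetRel.prodMk_mem_comp (hz s) (hz t)

section

variable [UniformSpace X] {x₀ a b : X} {E : SetRel X X}

theorem exists_path_inBall_of_mem_piEstarP (h : (a, b) ∈ piEstarP x₀ E) :
    ∃ γ : Path a b, InBall E γ := by
  obtain ⟨⟨p, q⟩, ⟨-, -, γ, -, -, hγ, -⟩, hpq⟩ := h
  obtain ⟨rfl, rfl⟩ := Prod.mk.inj hpq
  exact ⟨γ, hγ⟩

theorem mem_piEstarP_of_inBall [PathConnectedSpace X] (x₀ : X) {γ : Path a b}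
    (hγ : InBall E γ) : (a, b) ∈ piEstarP x₀ E := by
  let α := PathConnectedSpace.somePath x₀ a
  exact ⟨(⟨a, ⟦α⟧⟩, ⟨b, ⟦α.trans γ⟧⟩), ⟨α, α.trans γ, γ, rfl, rfl, hγ,
    Path.Homotopic.symm_trans_trans_cancel α γ⟩, rfl⟩

theorem piEstarP_subset_inv_comp (x₀ : X) (E : SetRel X X) : piEstarP x₀ E ⊆ E.inv ○ E := by
  rintro ⟨a, b⟩ h
  obtain ⟨γ, hγ⟩ := exists_path_inBall_of_mem_piEstarP h
  simpa using hγ.mem_inv_comp 0 1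

theorem exists_piEstarP_subset (x₀ : X) {S : SetRel X X} (hS : S ∈ 𝓤 X) :
    ∃ E ∈ 𝓤 X, piEstarP x₀ E ⊆ S := by
  obtain ⟨V, hV, _, hVS⟩ := comp_symm_mem_uniformity_sets hS
  refine ⟨V, hV, (piEstarP_subset_inv_comp x₀ V).trans ?_⟩
  rwa [SetRel.inv_eq_self]

theorem uniformlyLocallyPathConnected_of_piEstarP_mem (x₀ : X)
    (h : ∀ E ∈ 𝓤 X, piEstarP x₀ E ∈ 𝓤 X) : UniformlyLocallyPathConnected X := by
  intro E hE
  obtain ⟨V, hV, _, hVE⟩ := comp_symm_mem_uniformity_sets hE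
  refine ⟨piEstarP x₀ V, h V hV, fun x y z hxy hxz => ?_⟩
  have range_subset {w : X} (γ : Path x w) (hγ : InBall V γ) : range γ ⊆ ball x E := by
    rintro _ ⟨t, rfl⟩
    exact hVE (by simpa using hγ.mem_inv_comp 0 t)
  obtain ⟨γ₁, hγ₁⟩ := exists_path_inBall_of_mem_piEstarP hxy
  obtain ⟨γ₂, hγ₂⟩ := exists_path_inBall_of_mem_piEstarP hxz
  have hrange : range (γ₁.symm.trans γ₂) ⊆ ball x E := by
    rw [Path.trans_range, Path.symm_range]
    exact union_subset (range_subset γ₁ hγ₁) (range_subset γ₂ hγ₂)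
  exact ⟨γ₁.symm.trans γ₂, fun t => hrange ⟨t, rfl⟩⟩

theorem piEstarP_mem_of_uniformlyLocallyPathConnected [PathConnectedSpace X] (x₀ : X)
    (h : UniformlyLocallyPathConnected X) (hE : E ∈ 𝓤 X) : piEstarP x₀ E ∈ 𝓤 X := by
  obtain ⟨F, hF, joined⟩ := h E hE
  refine mem_of_superset hF fun ⟨a, b⟩ hab => ?_
  obtain ⟨γ, hγ⟩ := joined a a b (refl_mem_uniformity hF) hab
  exact mem_piEstarP_of_inBall x₀ ⟨a, hγ⟩

theorem piEstarP_mem_uniformity_iff [PathConnectedSpace X] (x₀ : X) :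
    (∀ E ∈ 𝓤 X, piEstarP x₀ E ∈ 𝓤 X) ↔ UniformlyLocallyPathConnected X :=
  ⟨uniformlyLocallyPathConnected_of_piEstarP_mem x₀,
    fun h _ => piEstarP_mem_of_uniformlyLocallyPathConnected x₀ h⟩

end

/-- For a path-connected uniform space `X`, the endpoint map `π_X : X̃ → X` generates
the uniform structure of `X` iff `X` is uniformly locally path-connected. -/
theorem endpoint_generates_iff_uniformly_locally_path_connected
    [UniformSpace X] [PathConnectedSpace X] (x₀ : X) :
    ((∀ S ∈ 𝓤 X, ∃ E ∈ 𝓤 X, piEstarP x₀ E ⊆ S) ∧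
        (∀ E ∈ 𝓤 X, piEstarP x₀ E ∈ 𝓤 X)) ↔
      (∀ E ∈ 𝓤 X, ∃ F ∈ 𝓤 X, ∀ x y z : X, (x, y) ∈ F → (x, z) ∈ F →
        ∃ γ : Path y z, ∀ t, (x, γ t) ∈ E) := by
  rw [and_iff_right fun S hS => exists_piEstarP_subset x₀ hS]
  exact piEstarP_mem_uniformity_iff x₀
end

section
/- If X is a uniformly locally path-connected uniform space, then for every entourage E of X there is an entourage F ⊆ E such that the ball B(x,F) is path-connected for every x ∈ X. -/
/-! Take for `F` the relation "`y` lies in the path component of `x` in `B(x,E)`". Then `F ⊆ E`,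
each ball `B(x,F)` is a path component, hence path-connected, and `F` is an entourage because it
contains the entourage `H` that uniform local path-connectedness provides for `E`. -/

open UniformSpace Filter
open scoped Uniformity

universe u

variable {X : Type u}

section PathEntourage

variable [TopologicalSpace X]

def pathEntourage (E : Set (X × X)) : Set (X × X) :=
  {p | p.2 ∈ pathComponentIn (ball p.1 E) p.1}

theorem pathEntourage_subset (E : Set (X × X)) : pathEntourage E ⊆ E :=
  fun p hp ↦ pathComponentIn_subset (F := ball p.1 E) hp

theorem isPathConnected_ball_pathEntourage {E : Set (X × X)} {x : X} (hx : (x, x) ∈ E) :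
    IsPathConnected (ball x (pathEntourage E)) :=
  isPathConnected_pathComponentIn (F := ball x E) hx

theorem subset_pathEntourage {H E : Set (X × X)}
    (hH : ∀ x z : X, (x, z) ∈ H → ∃ γ : Path x z, ∀ t, (x, γ t) ∈ E) :
    H ⊆ pathEntourage E :=
  fun ⟨x, z⟩ hxz ↦ hH x z hxz

end PathEntourage

/-- If `X` is uniformly locally path-connected, then every entourage `E` contains an
entourage `F` all of whose balls `B(x,F)` are path-connected. -/
theorem balls_path_connected_of_uniformly_locally_path_connected
    [UniformSpace X]
    (h : ∀ E ∈ 𝓤 X, ∃ H ∈ 𝓤 X, ∀ x y z : X, (x, y) ∈ H → (x, z) ∈ H →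
        ∃ γ : Path y z, ∀ t, (x, γ t) ∈ E) :
    ∀ E ∈ 𝓤 X, ∃ F ∈ 𝓤 X, F ⊆ E ∧ ∀ x y z : X, (x, y) ∈ F → (x, z) ∈ F →
      ∃ γ : Path y z, ∀ t, (x, γ t) ∈ F := by
  intro E hE
  obtain ⟨H, hH, hHE⟩ := h E hE
  have hHF : H ⊆ pathEntourage E :=
    subset_pathEntourage fun x z ↦ hHE x x z (refl_mem_uniformity hH)
  refine ⟨pathEntourage E, mem_of_superset hH hHF, pathEntourage_subset E, fun x y z hy hz ↦ ?_⟩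
  exact (isPathConnected_ball_pathEntourage (refl_mem_uniformity hE)).joinedIn y hy z hz
end

section
/- Let X be a path-connected uniform space with base point x₀ and E an entourage of X. If (E*)² (the relational square of the entourage E* on X̃) is transverse to the endpoint map π_X : X̃ → X, then every loop at x in B(x,E) is null-homotopic in X, for every x ∈ X. -/
/-!
Pick a path `α` from `x₀` to `x`. Both `([α], [α])` and `([α], [α ∗ γ])` lie in `E*`: the first
is witnessed by the constant path at `x`, the second by `γ` itself, since `α⁻¹ ∗ (α ∗ γ) ≃ γ`.
So `([α], [α ∗ γ]) ∈ (E*)²`, and both classes end at `x`; transversality forces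
`[α] = [α ∗ γ]`, and cancelling `α` leaves `[γ] = 1`.
-/

open UniformSpace Filter Function
open scoped Uniformity Topology

universe u

variable {X : Type u}

namespace Path.Homotopic

variable {Y : Type*} [TopologicalSpace Y] {x y z : Y}

theorem symm_trans_trans (α : Path x y) (γ : Path y z) :
    (α.symm.trans (α.trans γ)).Homotopic γ := by
  rw [← Quotient.eq]
  simp only [Quotient.mk_trans, Quotient.mk_symm]
  rw [← Quotient.trans_assoc, Quotient.symm_trans, Quotient.refl_trans]

theorem of_trans_left_homotopic {α : Path x y} {γ : Path y y} (h : (α.trans γ).Homotopic α) :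
    γ.Homotopic (Path.refl y) :=
  (symm_trans_trans α γ).symm.trans ((hcomp (refl α.symm) h).trans (symm_trans α))

end Path.Homotopic

section EstarP

variable [UniformSpace X] {x₀ : X} {E : Set (X × X)}

theorem self_mem_EstarP {a : PTilde X x₀} (h : ∃ z, (z, a.1) ∈ E) : (a, a) ∈ EstarP x₀ E := by
  obtain ⟨y, p⟩ := a
  obtain ⟨z, hz⟩ := h
  induction p using Path.Homotopic.Quotient.ind with | mk α =>
  exact ⟨α, α, Path.refl y, rfl, rfl, ⟨z, fun _ => hz⟩, Path.Homotopic.symm_trans α⟩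

theorem mk_trans_mem_EstarP {y z : X} (α : Path x₀ y) {γ : Path y z} (hγ : InBall E γ) :
    ((⟨y, .mk α⟩ : PTilde X x₀), (⟨z, .mk (α.trans γ)⟩ : PTilde X x₀)) ∈ EstarP x₀ E :=
  ⟨α, α.trans γ, γ, rfl, rfl, hγ, Path.Homotopic.symm_trans_trans α γ⟩

end EstarP

theorem loops_null_homotopic_of_transverse_general
    [UniformSpace X] [PathConnectedSpace X] (x₀ : X)
    (E : Set (X × X))
    (htr : ∀ a b : PTilde X x₀,
      (a, b) ∈ SetRel.comp (EstarP x₀ E) (EstarP x₀ E) → a.1 = b.1 → a = b) :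
    ∀ (x : X) (γ : Path x x), (∀ t, (x, γ t) ∈ E) → γ.Homotopic (Path.refl x) := by
  intro x γ hγ
  let α := PathConnectedSpace.somePath x₀ x
  have hxx : (x, x) ∈ E := by simpa using hγ 0
  have hloop : (⟨x, Path.Homotopic.Quotient.mk α⟩ : PTilde X x₀) =
      ⟨x, Path.Homotopic.Quotient.mk (α.trans γ)⟩ :=
    htr _ _ (SetRel.prodMk_mem_comp (self_mem_EstarP ⟨x, hxx⟩)
      (mk_trans_mem_EstarP α ⟨x, hγ⟩)) rfl
  have hαγ : α.Homotopic (α.trans γ) :=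
    Path.Homotopic.Quotient.eq.mp (eq_of_heq (Sigma.mk.inj_iff.mp hloop).2)
  exact Path.Homotopic.of_trans_left_homotopic hαγ.symm

/-- If `(E*)²` is transverse to the endpoint map `π_X : X̃ → X`, then every loop at `x`
contained in `B(x,E)` is null-homotopic in `X`. -/
theorem loops_null_homotopic_of_transverse
    [UniformSpace X] [PathConnectedSpace X] (x₀ : X)
    (E : Set (X × X)) (hE : E ∈ 𝓤 X)
    (htr : ∀ a b : PTilde X x₀,
      (a, b) ∈ SetRel.comp (EstarP x₀ E) (EstarP x₀ E) → a.1 = b.1 → a = b) :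
    ∀ (x : X) (γ : Path x x), (∀ t, (x, γ t) ∈ E) → γ.Homotopic (Path.refl x) :=
  loops_null_homotopic_of_transverse_general x₀ E htr
end

section
/- Let (G_n)_{n∈ℕ} be an inverse sequence of countable groups with bonding maps p_n : G_{n+1} → G_n. If lim¹ of the sequence vanishes — that is, for every sequence (g_n) with g_n ∈ G_n there exists (h_n) with h_n ∈ G_n such that g_n = h_n · p_n(h_{n+1})⁻¹ for all n — then the sequence satisfies the Mittag-Leffler condition. -/
/-!
Fix `n` and write `I d` for the image of `G (n + d)` in `G n`. If `h` solves the cocycle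
equations for `g`, then the partial products `s d` of the images of `g n, …, g (n + d - 1)`
in `G n` satisfy `s d = h n * (image of h (n + d))⁻¹`, so the nested cosets `s d • I d` all
contain `h n`. Conversely every nested sequence of cosets `s d • I d` with `s 0 = 1` comes
from some `g`. If the `I d` never stabilise, one can enumerate the countable group `G n` and,
at each strict drop `I (d + 1) < I d`, move to a subcoset avoiding the first enumerated point
still in the current coset; the resulting tower has empty intersection, so `lim¹ ≠ 0`.
-/

universe u

variable (G : ℕ → Type u) [∀ n, Group (G n)]

/-- The composite bonding homomorphism `G m →* G n` for `n ≤ m`. -/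
def bond (p : ∀ n, G (n + 1) →* G n) : ∀ {n m : ℕ}, n ≤ m → (G m →* G n) :=
  fun {n _} h =>
    Nat.leRecOn h (fun {k} (φ : G k →* G n) => φ.comp (p k)) (MonoidHom.id (G n))

theorem Subgroup.exists_mem_mul_notMem_of_lt {H : Type*} [Group H] {K L : Subgroup H}
    (hLK : L < K) (a : H) : ∃ y ∈ K, a * y ∉ L := by
  by_cases ha : a ∈ L
  · obtain ⟨y, hyK, hyL⟩ := SetLike.exists_of_lt hLK
    exact ⟨y, hyK, fun hay => hyL (by simpa using L.mul_mem (L.inv_mem ha) hay)⟩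
  · exact ⟨1, K.one_mem, by simpa using ha⟩

theorem Antitone.exists_succ_lt_of_forall_exists_ne {α : Type*} [PartialOrder α] {I : ℕ → α}
    (hI : Antitone I) (hne : ∀ m, ∃ k, m ≤ k ∧ I k ≠ I m) (m : ℕ) :
    ∃ d, m ≤ d ∧ I (d + 1) < I d := by
  by_contra! hconst
  have hstable : ∀ k, m ≤ k → I k = I m := by
    intro k hmk
    induction k, hmk using Nat.le_induction with
    | base => rfl
    | succ k hmk ih => exact ((hI k.le_succ).eq_of_not_lt (hconst k hmk)).trans ih
  obtain ⟨k, hmk, hk⟩ := hne m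
  exact hk (hstable k hmk)

section CosetTower

variable {H : Type*} [Group H] (I : ℕ → Subgroup H)

/-- The left cosets `s d • I d` are nested. -/
def IsCosetTower (s : ℕ → H) : Prop :=
  ∀ d, (s d)⁻¹ * s (d + 1) ∈ I d

theorem IsCosetTower.inv_mul_mem_of_le {I : ℕ → Subgroup H} (hI : Antitone I) {s : ℕ → H}
    (hs : IsCosetTower I s) (a : H) {d e : ℕ} (hde : d ≤ e) (he : a⁻¹ * s e ∈ I e) :
    a⁻¹ * s d ∈ I d := by
  have hsucc : ∀ d, a⁻¹ * s (d + 1) ∈ I (d + 1) → a⁻¹ * s d ∈ I d := fun d hd => by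
    simpa [mul_assoc] using (I d).mul_mem (hI d.le_succ hd) ((I d).inv_mem (hs d))
  exact antitone_nat_of_succ_le (f := fun d => a⁻¹ * s d ∈ I d) hsucc hde he

open Classical in
noncomputable def escapeStep (K L : Subgroup H) (a : H) : H :=
  if h : ∃ y ∈ K, a * y ∉ L then h.choose else 1

theorem escapeStep_mem (K L : Subgroup H) (a : H) : escapeStep K L a ∈ K := by
  unfold escapeStep
  split_ifs with h
  exacts [h.choose_spec.1, K.one_mem]

theorem mul_escapeStep_notMem {K L : Subgroup H} (hLK : L < K) (a : H) :
    a * escapeStep K L a ∉ L := by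
  have h := Subgroup.exists_mem_mul_notMem_of_lt hLK a
  rw [escapeStep, dif_pos h]
  exact h.choose_spec.2

variable (x : ℕ → H)

noncomputable def firstIndex (σ : H) (d : ℕ) : ℕ :=
  sInf {j | (x j)⁻¹ * σ ∈ I d}

theorem firstIndex_eq {σ : H} {d j : ℕ} (hj : (x j)⁻¹ * σ ∈ I d)
    (hlt : ∀ i < j, (x i)⁻¹ * σ ∉ I d) : firstIndex I x σ d = j :=
  le_antisymm (Nat.sInf_le hj) <| not_lt.mp fun hlt' =>
    hlt _ hlt' (Nat.sInf_mem (s := {j | (x j)⁻¹ * σ ∈ I d}) ⟨j, hj⟩)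

/-- At each step, leave the coset through the first enumerated point it still contains. -/
noncomputable def escapingSeq : ℕ → H
  | 0 => 1
  | d + 1 => escapingSeq d *
      escapeStep (I d) (I (d + 1)) ((x (firstIndex I x (escapingSeq d) d))⁻¹ * escapingSeq d)

theorem isCosetTower_escapingSeq : IsCosetTower I (escapingSeq I x) := fun d => by
  simpa [escapingSeq] using escapeStep_mem _ _ _

theorem inv_mul_escapingSeq_succ_notMem {d : ℕ} (hd : I (d + 1) < I d) :
    (x (firstIndex I x (escapingSeq I x d) d))⁻¹ * escapingSeq I x (d + 1) ∉ I (d + 1) := by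
  rw [escapingSeq, ← mul_assoc]
  exact mul_escapeStep_notMem hd _

theorem exists_forall_inv_mul_escapingSeq_notMem (hI : Antitone I)
    (hdrop : ∀ m, ∃ d, m ≤ d ∧ I (d + 1) < I d) (j : ℕ) :
    ∃ D, ∀ i < j, ∀ d, D ≤ d → (x i)⁻¹ * escapingSeq I x d ∉ I d := by
  induction j with
  | zero => exact ⟨0, by simp⟩
  | succ j ih =>
    obtain ⟨D, hD⟩ := ih
    have hescape : ∃ e, (x j)⁻¹ * escapingSeq I x e ∉ I e := by
      by_contra! hmem
      obtain ⟨d, hDd, hd⟩ := hdrop D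
      have hfirst : firstIndex I x (escapingSeq I x d) d = j :=
        firstIndex_eq I x (hmem d) fun i hi => hD i hi d hDd
      exact hfirst ▸ inv_mul_escapingSeq_succ_notMem I x hd <| hmem (d + 1)
    obtain ⟨e, he⟩ := hescape
    refine ⟨max D e, fun i hi d hd hmem => ?_⟩
    rcases Nat.lt_succ_iff_lt_or_eq.mp hi with hi | rfl
    · exact hD i hi d (le_of_max_le_left hd) hmem
    · exact he ((isCosetTower_escapingSeq I x).inv_mul_mem_of_le hI _ (le_of_max_le_right hd) hmem)

theorem exists_isCosetTower_forall_exists_notMem [Countable H] (hI : Antitone I)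
    (hdrop : ∀ m, ∃ d, m ≤ d ∧ I (d + 1) < I d) :
    ∃ s : ℕ → H, s 0 = 1 ∧ IsCosetTower I s ∧ ∀ a, ∃ d, a⁻¹ * s d ∉ I d := by
  obtain ⟨x, hx⟩ := exists_surjective_nat H
  refine ⟨escapingSeq I x, rfl, isCosetTower_escapingSeq I x, fun a => ?_⟩
  obtain ⟨j, rfl⟩ := hx a
  obtain ⟨D, hD⟩ := exists_forall_inv_mul_escapingSeq_notMem I x hI hdrop (j + 1)
  exact ⟨D, hD j j.lt_succ_self D le_rfl⟩

end CosetTower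

section InverseSequence

variable (p : ∀ n, G (n + 1) →* G n)

theorem bond_self (n : ℕ) : bond G p (le_refl n) = MonoidHom.id (G n) :=
  Nat.leRecOn_self _

theorem bond_succ {n m : ℕ} (h : n ≤ m) :
    bond G p (h.trans m.le_succ) = (bond G p h).comp (p m) :=
  Nat.leRecOn_succ h _

def bondRange (n d : ℕ) : Subgroup (G n) :=
  (bond G p (Nat.le_add_right n d)).range

theorem bondRange_antitone (n : ℕ) : Antitone (bondRange G p n) :=
  antitone_nat_of_succ_le fun d => by
    rintro _ ⟨z, rfl⟩
    refine ⟨p (n + d) z, ?_⟩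
    change _ = bond G p ((Nat.le_add_right n d).trans (n + d).le_succ) z
    rw [bond_succ]
    rfl

theorem exists_bond_eq_of_isCosetTower {n : ℕ} {s : ℕ → G n}
    (hs : IsCosetTower (bondRange G p n) s) :
    ∃ g : ∀ t, G t,
      ∀ d, bond G p (Nat.le_add_right n d) (g (n + d)) = (s d)⁻¹ * s (d + 1) := by
  have hpre : ∀ t, ∃ a : G t, ∀ hnt : n ≤ t,
      bond G p hnt a = (s (t - n))⁻¹ * s (t - n + 1) := by
    intro t
    by_cases hnt : n ≤ t
    · obtain ⟨d, rfl⟩ := Nat.exists_eq_add_of_le hnt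
      obtain ⟨a, ha⟩ := hs d
      exact ⟨a, fun _ => by simpa using ha⟩
    · exact ⟨1, fun h => absurd h hnt⟩
  choose g hg using hpre
  exact ⟨g, fun d => by simpa using hg (n + d) (Nat.le_add_right n d)⟩

theorem eq_mul_inv_bond_of_cocycle {n : ℕ} {g h : ∀ t, G t}
    (hgh : ∀ t, g t = h t * (p t (h (t + 1)))⁻¹) {s : ℕ → G n} (hs0 : s 0 = 1)
    (hsg : ∀ d, bond G p (Nat.le_add_right n d) (g (n + d)) = (s d)⁻¹ * s (d + 1)) (d : ℕ) :
    s d = h n * (bond G p (Nat.le_add_right n d) (h (n + d)))⁻¹ := by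
  induction d with
  | zero => simp [hs0, bond_self]
  | succ d ih =>
    calc s (d + 1) = s d * ((s d)⁻¹ * s (d + 1)) := (mul_inv_cancel_left _ _).symm
      _ = h n * (bond G p ((Nat.le_add_right n d).trans (n + d).le_succ)
            (h (n + d + 1)))⁻¹ := by
        rw [← hsg, hgh, map_mul, map_inv, ih, bond_succ G p (Nat.le_add_right n d),
          MonoidHom.comp_apply]
        group

end InverseSequence

/-- For an inverse sequence of countable groups, vanishing of `lim¹` (solvability of
the twisted cocycle equations) implies the Mittag-Leffler condition. -/
theorem mittag_leffler_of_lim1_vanishing [∀ n, Countable (G n)]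
    (p : ∀ n, G (n + 1) →* G n)
    (hlim1 : ∀ g : ∀ n, G n, ∃ h : ∀ n, G n, ∀ n, g n = h n * (p n (h (n + 1)))⁻¹) :
    ∀ n : ℕ, ∃ m : ℕ, ∃ hm : n ≤ m, ∀ k : ℕ, ∀ hk : m ≤ k,
      (bond G p (hm.trans hk)).range = (bond G p hm).range := by
  intro n
  by_contra! hML
  have hne : ∀ m, ∃ k, m ≤ k ∧ bondRange G p n k ≠ bondRange G p n m := by
    intro m
    obtain ⟨k, hk, hk_ne⟩ := hML (n + m) (Nat.le_add_right n m)
    obtain ⟨e, rfl⟩ := Nat.exists_eq_add_of_le ((Nat.le_add_right n m).trans hk)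
    exact ⟨e, by omega, hk_ne⟩
  obtain ⟨s, hs0, hs, hescape⟩ := exists_isCosetTower_forall_exists_notMem _
    (bondRange_antitone G p n) ((bondRange_antitone G p n).exists_succ_lt_of_forall_exists_ne hne)
  obtain ⟨g, hg⟩ := exists_bond_eq_of_isCosetTower G p hs
  obtain ⟨h, hh⟩ := hlim1 g
  obtain ⟨d, hd⟩ := hescape (h n)
  refine hd ?_
  rw [eq_mul_inv_bond_of_cocycle G p hh hs0 hg d, inv_mul_cancel_left]
  exact inv_mem ⟨h (n + d), rfl⟩
end

section
/- If X is a uniformly joinable uniform space, then for every entourage E of X there is an entourage F such that the image of π₁(R(X,F), x) → π₁(R(X,E), x) is contained in the image of the natural map from the uniform fundamental group π̌₁(X,x) (the inverse limit of {π₁(R(X,H),x)}_H) to π₁(R(X,E),x), for every x ∈ X; i.e. the uniform fundamental pro-group of X satisfies the strong Mittag-Leffler condition. -/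
open UniformSpace Filter Function
open scoped Uniformity

universe u v

variable {X : Type u} {Y : Type v}

/-- Homotopy rel endpoints of edge-paths in the Rips complex `R(X,E)`. -/
inductive RipsHtpy (E : Set (X × X)) : List X → List X → Prop
  | refl (l : List X) : RipsHtpy E l l
  | symm {l₁ l₂ : List X} : RipsHtpy E l₁ l₂ → RipsHtpy E l₂ l₁
  | trans {l₁ l₂ l₃ : List X} : RipsHtpy E l₁ l₂ → RipsHtpy E l₂ l₃ → RipsHtpy E l₁ l₃
  | ins (l₁ l₂ : List X) (a v b : X) :
      (a, v) ∈ E → (v, b) ∈ E → (a, b) ∈ E →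
      RipsHtpy E (l₁ ++ a :: b :: l₂) (l₁ ++ a :: v :: b :: l₂)

/-- `E`-homotopy of chains (endpoints may move within `E`). -/
def EHomotopic (E : Set (X × X)) (c d : List X) : Prop :=
  ∃ xc xd yc yd : X, c.head? = some xc ∧ d.head? = some xd ∧
    c.getLast? = some yc ∧ d.getLast? = some yd ∧
    (xc, xd) ∈ E ∧ (yc, yd) ∈ E ∧
    RipsHtpy E c (xc :: (d ++ [yc]))

/-- A generalized (uniform) path from `x` to `y`. -/
structure GenPath (X : Type u) [UniformSpace X] (x y : X) where
  c : Set (X × X) → List X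
  chain : ∀ E ∈ 𝓤 X, IsEChain E (c E)
  head : ∀ E ∈ 𝓤 X, (c E).head? = some x
  last : ∀ E ∈ 𝓤 X, (c E).getLast? = some y
  compat : ∀ E ∈ 𝓤 X, ∀ F ∈ 𝓤 X, F ⊆ E → RipsHtpy E (c F) (c E)

/-- A generalized path is `E`-short if its `E`-term is the edge `e(x,y)`. -/
def GenPath.EShort [UniformSpace X] {x y : X} (p : GenPath X x y) (E : Set (X × X)) : Prop :=
  (x, y) ∈ E ∧ RipsHtpy E (p.c E) [x, y]

/-- `X` is joinable: any two points are joined by a generalized path. -/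
def Joinable (X : Type u) [UniformSpace X] : Prop :=
  ∀ x y : X, Nonempty (GenPath X x y)

/-- `X` is uniformly joinable. -/
def UniformlyJoinable (X : Type u) [UniformSpace X] : Prop :=
  ∀ E ∈ 𝓤 X, ∃ F ∈ 𝓤 X, ∀ x y : X, (x, y) ∈ F → ∃ p : GenPath X x y, p.EShort E

/-- `X` is chain connected. -/
def ChainConnected (X : Type u) [UniformSpace X] : Prop :=
  ∀ E ∈ 𝓤 X, ∀ x y : X, ∃ l : List X,
    IsEChain E l ∧ l.head? = some x ∧ l.getLast? = some y

/-- `f` generates the uniform structure of `Y`. -/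
def GeneratesUS [UniformSpace X] [UniformSpace Y] (f : X → Y) : Prop :=
  (∀ S ∈ 𝓤 Y, ∃ E ∈ 𝓤 X, fimg f E ⊆ S) ∧ ∀ E ∈ 𝓤 X, fimg f E ∈ 𝓤 Y

theorem RipsHtpy.map {E : Set (X × X)} {E' : Set (Y × Y)} (f : X → Y)
    (h : ∀ a b : X, (a, b) ∈ E → (f a, f b) ∈ E') :
    ∀ {l₁ l₂ : List X}, RipsHtpy E l₁ l₂ → RipsHtpy E' (l₁.map f) (l₂.map f) := by
  intro l₁ l₂ H
  induction H with
  | refl l => exact .refl _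
  | symm _ ih => exact .symm ih
  | trans _ _ ih₁ ih₂ => exact .trans ih₁ ih₂
  | ins l₁ l₂ a v b h₁ h₂ h₃ =>
      simpa using RipsHtpy.ins (l₁.map f) (l₂.map f) (f a) (f v) (f b)
        (h a v h₁) (h v b h₂) (h a b h₃)

theorem GeneratesUS.preimage [UniformSpace X] [UniformSpace Y] {f : X → Y}
    (hf : GeneratesUS f) : ∀ S ∈ 𝓤 Y, Prod.map f f ⁻¹' S ∈ 𝓤 X := by
  intro S hS
  obtain ⟨E, hE, hES⟩ := hf.1 S hS
  exact Filter.mem_of_superset hE fun p hp => hES ⟨p, hp, rfl⟩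

/-- The pushforward of a generalized path along a map inducing the uniformity. -/
def GenPath.map [UniformSpace X] [UniformSpace Y] (f : X → Y)
    (hf : ∀ S ∈ 𝓤 Y, Prod.map f f ⁻¹' S ∈ 𝓤 X) {x y : X} (p : GenPath X x y) :
    GenPath Y (f x) (f y) where
  c := fun F => (p.c (Prod.map f f ⁻¹' F)).map f
  chain := fun F hF => List.isChain_map_of_isChain f (fun a b hab => hab) (p.chain _ (hf F hF))
  head := fun F hF => by
    rw [List.head?_map, p.head _ (hf F hF)]; rfl
  last := fun F hF => by
    rw [List.getLast?_map, p.last _ (hf F hF)]; rfl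
  compat := fun E hE F hF hFE =>
    RipsHtpy.map f (fun a b hab => hab)
      (p.compat _ (hf E hE) _ (hf F hF) (Set.preimage_mono hFE))

/-- The space of generalized paths starting at `x₀`. -/
def GPSpace (X : Type u) [UniformSpace X] (x₀ : X) := Σ y : X, GenPath X x₀ y

/-- The endpoint projection. -/
def GPSpace.endpoint [UniformSpace X] {x₀ : X} (c : GPSpace X x₀) : X := c.1

/-- The basic entourage `E*` on `GP(X,x₀)`. -/
def EstarGP [UniformSpace X] (x₀ : X) (E : Set (X × X)) :
    Set (GPSpace X x₀ × GPSpace X x₀) :=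
  { q | EHomotopic E (q.1.2.c E) (q.2.2.c E) }

/-- The induced map on spaces of generalized paths. -/
def gpMap [UniformSpace X] [UniformSpace Y] (f : X → Y)
    (hf : ∀ S ∈ 𝓤 Y, Prod.map f f ⁻¹' S ∈ 𝓤 X) (x₀ : X) :
    GPSpace X x₀ → GPSpace Y (f x₀) :=
  fun c => ⟨f c.1, c.2.map f hf⟩

/-! An `F`-chain `a₀, …, aₙ` is replaced by the concatenation of `E`-short generalized paths
joining consecutive points. Its `E`-term is homotopic to `a₀ a₁ a₁ a₂ a₂ … aₙ`, which collapses
to the chain itself since `E` is reflexive. -/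

theorem RipsHtpy.append_left {E : Set (X × X)} (m : List X) {l₁ l₂ : List X}
    (h : RipsHtpy E l₁ l₂) : RipsHtpy E (m ++ l₁) (m ++ l₂) := by
  induction h with
  | refl l => exact .refl _
  | symm _ ih => exact .symm ih
  | trans _ _ ih₁ ih₂ => exact .trans ih₁ ih₂
  | ins l₁ l₂ a v b h₁ h₂ h₃ => simpa using RipsHtpy.ins (m ++ l₁) l₂ a v b h₁ h₂ h₃

theorem RipsHtpy.append_right {E : Set (X × X)} (m : List X) {l₁ l₂ : List X}
    (h : RipsHtpy E l₁ l₂) : RipsHtpy E (l₁ ++ m) (l₂ ++ m) := by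
  induction h with
  | refl l => exact .refl _
  | symm _ ih => exact .symm ih
  | trans _ _ ih₁ ih₂ => exact .trans ih₁ ih₂
  | ins l₁ l₂ a v b h₁ h₂ h₃ => simpa using RipsHtpy.ins l₁ (l₂ ++ m) a v b h₁ h₂ h₃

theorem RipsHtpy.append_congr {E : Set (X × X)} {l₁ l₂ m₁ m₂ : List X}
    (h : RipsHtpy E l₁ l₂) (h' : RipsHtpy E m₁ m₂) : RipsHtpy E (l₁ ++ m₁) (l₂ ++ m₂) :=
  (h.append_right m₁).trans (h'.append_left l₂)

theorem RipsHtpy.cons_cons_self {E : Set (X × X)} {a b : X} (l : List X) (hab : (a, b) ∈ E)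
    (hb : (b, b) ∈ E) : RipsHtpy E (a :: b :: b :: l) (a :: b :: l) :=
  (RipsHtpy.ins [] l a b b hab hb hab).symm

section GenPath

variable [UniformSpace X]

def GenPath.const (x : X) : GenPath X x x where
  c _ := [x]
  chain _ _ := List.isChain_singleton x
  head _ _ := rfl
  last _ _ := rfl
  compat _ _ _ _ _ := .refl _

theorem GenPath.c_ne_nil {x y : X} (p : GenPath X x y) {E : Set (X × X)} (hE : E ∈ 𝓤 X) :
    p.c E ≠ [] := by
  intro h
  simpa [h] using p.head E hE

def GenPath.trans {x y z : X} (p : GenPath X x y) (q : GenPath X y z) : GenPath X x z where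
  c E := p.c E ++ q.c E
  chain E hE := by
    rw [IsEChain, List.Chain', List.isChain_append]
    refine ⟨p.chain E hE, q.chain E hE, ?_⟩
    intro a ha b hb
    rw [p.last E hE, Option.mem_some_iff] at ha
    rw [q.head E hE, Option.mem_some_iff] at hb
    subst ha hb
    exact refl_mem_uniformity hE
  head E hE := by rw [List.head?_append, p.head E hE]; rfl
  last E hE := by rw [List.getLast?_append_of_ne_nil _ (q.c_ne_nil hE), q.last E hE]
  compat E hE F hF hFE := (p.compat E hE F hF hFE).append_congr (q.compat E hE F hF hFE)

theorem GenPath.trans_c {x y z : X} (p : GenPath X x y) (q : GenPath X y z) (E : Set (X × X)) :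
    (p.trans q).c E = p.c E ++ q.c E :=
  rfl

theorem exists_genPath_ripsHtpy_of_isEChain {E F : Set (X × X)} (hE : E ∈ 𝓤 X)
    (hF : ∀ x y : X, (x, y) ∈ F → ∃ p : GenPath X x y, p.EShort E) (a : X) (t : List X) {b : X}
    (hchain : IsEChain F (a :: t)) (hlast : (a :: t).getLast? = some b) :
    ∃ g : GenPath X a b, RipsHtpy E (g.c E) (a :: t) := by
  induction t generalizing a with
  | nil =>
    obtain rfl : a = b := by simpa using hlast
    exact ⟨.const a, .refl _⟩
  | cons a₁ rest ih =>
    rw [IsEChain, List.Chain', List.isChain_cons_cons] at hchain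
    rw [List.getLast?_cons_cons] at hlast
    obtain ⟨g, hg⟩ := ih a₁ hchain.2 hlast
    obtain ⟨p, hpE, hp⟩ := hF a a₁ hchain.1
    refine ⟨p.trans g, ?_⟩
    rw [GenPath.trans_c]
    exact (hp.append_congr hg).trans (.cons_cons_self rest hpE (refl_mem_uniformity hE))

end GenPath

/-- If `X` is uniformly joinable then its uniform fundamental pro-group satisfies the
strong Mittag-Leffler condition at every point: the image of `π₁(R(X,F)) → π₁(R(X,E))`
is contained in the image of the uniform fundamental group `π̌₁(X,x)` (the inverse
limit, i.e. generalized loops) in `π₁(R(X,E))`. -/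
theorem strong_ML_of_uniformly_joinable [UniformSpace X]
    (huj : UniformlyJoinable X) :
    ∀ x : X, ∀ E ∈ 𝓤 X, ∃ F ∈ 𝓤 X, F ⊆ E ∧
      ∀ l : List X, IsEChain F l → l.head? = some x → l.getLast? = some x →
        ∃ g : GenPath X x x, RipsHtpy E (g.c E) l := by
  intro x E hE
  obtain ⟨F, hF, hjoin⟩ := huj E hE
  refine ⟨F ∩ E, inter_mem hF hE, Set.inter_subset_right, ?_⟩
  rintro (_ | ⟨a, t⟩) hchain hhead hlast
  · simp at hhead
  · obtain rfl : a = x := by simpa using hhead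
    exact exists_genPath_ripsHtpy_of_isEChain hE hjoin a t
      (List.IsChain.imp (fun _ _ h => h.1) hchain) hlast
end

section
/- If f : X → Y is a surjection of uniform spaces that generates the uniform structure of Y and X is uniformly joinable, then Y is uniformly joinable. -/
open UniformSpace Filter Function
open scoped Uniformity

universe u v

variable {X : Type u} {Y : Type v}

theorem RipsHtpy.mono {E E' : Set (X × X)} (hEE' : E ⊆ E') {l₁ l₂ : List X}
    (h : RipsHtpy E l₁ l₂) : RipsHtpy E' l₁ l₂ := by
  simpa using h.map id fun _ _ hab => hEE' hab

theorem GenPath.EShort.mono [UniformSpace X] {x y : X} {p : GenPath X x y}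
    {E E' : Set (X × X)} (hp : p.EShort E) (hE : E ∈ 𝓤 X) (hE' : E' ∈ 𝓤 X) (hEE' : E ⊆ E') :
    p.EShort E' :=
  ⟨hEE' hp.1, .trans (.symm (p.compat E' hE' E hE hEE')) (hp.2.mono hEE')⟩

theorem GenPath.EShort.map [UniformSpace X] [UniformSpace Y] {f : X → Y}
    {hf : ∀ S ∈ 𝓤 Y, Prod.map f f ⁻¹' S ∈ 𝓤 X} {x y : X} {p : GenPath X x y}
    {S : Set (Y × Y)} (hp : p.EShort (Prod.map f f ⁻¹' S)) : (p.map f hf).EShort S :=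
  ⟨hp.1, hp.2.map f fun _ _ hab => hab⟩

theorem uniformlyJoinable_of_generates_general [UniformSpace X] [UniformSpace Y]
    (f : X → Y) (hgen : GeneratesUS f)
    (huj : UniformlyJoinable X) : UniformlyJoinable Y := by
  intro S hS
  obtain ⟨E, hE, hES⟩ := hgen.1 S hS
  obtain ⟨F, hF, hF_short⟩ := huj E hE
  refine ⟨fimg f F, hgen.2 F hF, ?_⟩
  rintro _ _ ⟨⟨x₁, x₂⟩, hx, ⟨⟩⟩
  obtain ⟨p, hp⟩ := hF_short x₁ x₂ hx
  have hp' : p.EShort (Prod.map f f ⁻¹' S) :=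
    hp.mono hE (hgen.preimage S hS) (Set.image_subset_iff.mp hES)
  exact ⟨p.map f hgen.preimage, hp'.map⟩

/-- If a surjection `f : X → Y` generates the uniform structure of `Y` and `X` is
uniformly joinable, then `Y` is uniformly joinable. -/
theorem uniformlyJoinable_of_generates [UniformSpace X] [UniformSpace Y]
    (f : X → Y) (hsurj : Function.Surjective f) (hgen : GeneratesUS f)
    (huj : UniformlyJoinable X) : UniformlyJoinable Y :=
  uniformlyJoinable_of_generates_general f hgen huj
end

section
/- Let f : X → Y be a function from a uniform space X having the chain lifting property. Then condition C2 (for every entourage E there is an entourage F such that any two F-chains with common origin are E-homotopic whenever their images are f(F)-homotopic) is equivalent to condition C3 (for every entourage E there is an entourage F such that any two F-chains starting at the same point with identical images under f are E-close, meaning corresponding entries are E-related). -/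
open UniformSpace Filter Function
open scoped Uniformity

universe u v

variable {X : Type u} {Y : Type v}

/-!
C3 ⇒ C2: lift an `f(F)`-homotopy between the images one elementary move at a time, starting
from `α`. By C3, a lift of the shorter chain of a move is pointwise close to the lift of the longer
one with the extra vertex deleted, so the two lifts are joined by a ladder of small simplices. The
endpoints of successive lifts drift inside the fibre over the common endpoint; appending the list
of all earlier endpoints keeps the endpoint of the chain fixed. At the end, C3 applied once more to
the lift together with this tail shows that both stay close to the lift `x :: β ++ [w]` of the
target, and the tail collapses.

C2 ⇒ C3: chains with a common origin and equal images have trivially homotopic images, so by C2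
their last vertices are close; apply this to all prefixes.
-/

open scoped SetRel

theorem List.Forall₂.rel_of_getLast? {α β : Type*} {R : α → β → Prop} {l₁ : List α}
    {l₂ : List β} (h : List.Forall₂ R l₁ l₂) {a : α} {b : β} (ha : l₁.getLast? = some a)
    (hb : l₂.getLast? = some b) : R a b := by
  rw [← List.forall₂_reverse_iff] at h
  rw [← List.head?_reverse] at ha hb
  generalize l₁.reverse = r₁ at h ha
  generalize l₂.reverse = r₂ at h hb
  cases h with
  | nil => simp at ha
  | cons hr _ => simp_all

section Chains

variable {E : SetRel X X}

theorem isEChain_iff_isChain {l : List X} :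
    IsEChain E l ↔ l.IsChain (fun a b => (a, b) ∈ E) :=
  Iff.rfl

theorem IsEChain.mono {E' : SetRel X X} (h : E ⊆ E') {l : List X} (hl : IsEChain E l) :
    IsEChain E' l :=
  List.IsChain.imp (fun _ _ hab => h hab) hl

theorem IsEChain.map (f : X → Y) {l : List X} (hl : IsEChain E l) :
    IsEChain (fimg f E) (l.map f) :=
  List.isChain_map_of_isChain f (fun a b hab => ⟨(a, b), hab, rfl⟩) hl

theorem IsEChain.concat {l : List X} {b c : X} (hl : IsEChain E l) (hb : l.getLast? = some b)
    (hbc : (b, c) ∈ E) : IsEChain E (l ++ [c]) := by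
  simp_all [isEChain_iff_isChain, List.isChain_append]

theorem isEChain_insert_iff {l₁ l₂ : List X} {a v b : X} (hav : (a, v) ∈ E) (hvb : (v, b) ∈ E)
    (hab : (a, b) ∈ E) :
    IsEChain E (l₁ ++ a :: b :: l₂) ↔ IsEChain E (l₁ ++ a :: v :: b :: l₂) := by
  simp only [isEChain_iff_isChain, List.isChain_append_cons_cons, List.isChain_cons_cons]
  tauto

end Chains

namespace RipsHtpy

variable {E : SetRel X X} {l l' : List X}

theorem append_left_s16 (p : List X) (h : RipsHtpy E l l') : RipsHtpy E (p ++ l) (p ++ l') := by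
  induction h with
  | refl l => exact .refl _
  | symm _ ih => exact ih.symm
  | trans _ _ ih₁ ih₂ => exact ih₁.trans ih₂
  | ins l₁ l₂ a v b hav hvb hab => simpa using ins (p ++ l₁) l₂ a v b hav hvb hab

theorem isEChain_iff (h : RipsHtpy E l l') : IsEChain E l ↔ IsEChain E l' := by
  induction h with
  | refl l => rfl
  | symm _ ih => exact ih.symm
  | trans _ _ ih₁ ih₂ => exact ih₁.trans ih₂
  | ins l₁ l₂ a v b hav hvb hab => exact isEChain_insert_iff hav hvb hab

theorem getLast?_eq (h : RipsHtpy E l l') : l.getLast? = l'.getLast? := by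
  induction h with
  | refl l => rfl
  | symm _ ih => exact ih.symm
  | trans _ _ ih₁ ih₂ => exact ih₁.trans ih₂
  | ins l₁ l₂ a v b => simp

theorem two_le_length_iff (h : RipsHtpy E l l') : 2 ≤ l.length ↔ 2 ≤ l'.length := by
  induction h with
  | refl l => rfl
  | symm _ ih => exact ih.symm
  | trans _ _ ih₁ ih₂ => exact ih₁.trans ih₂
  | ins l₁ l₂ a v b => simp only [List.length_append, List.length_cons]; omega

theorem cons_head {a : X} (hl : IsEChain E l) (ha : l.head? = some a) (h2 : 2 ≤ l.length)
    (haa : (a, a) ∈ E) : RipsHtpy E l (a :: l) := by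
  match l, hl, ha, h2 with
  | a' :: b :: l, hl, ha, _ =>
    obtain rfl : a' = a := by simpa using ha
    have hab : (a', b) ∈ E := (List.isChain_cons_cons.1 hl).1
    exact ins [] l a' a' b haa hab hab

theorem concat_getLast {b : X} (hl : IsEChain E l) (hb : l.getLast? = some b)
    (h2 : 2 ≤ l.length) (hbb : (b, b) ∈ E) : RipsHtpy E l (l ++ [b]) := by
  obtain ⟨l, rfl⟩ := List.getLast?_eq_some_iff.1 hb
  obtain ⟨p, c, rfl⟩ : ∃ p c, l = p ++ [c] := by
    rcases List.eq_nil_or_concat' l with rfl | h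
    · simp at h2
    · exact h
  have hcb : (c, b) ∈ E := by
    rw [isEChain_iff_isChain, List.append_assoc, List.singleton_append,
      List.isChain_append_cons_cons] at hl
    exact hl.2.1
  simpa using ins p [] c b b hcb hbb hcb

theorem replace {a y y' b : X} (hay : (a, y) ∈ E) (hay' : (a, y') ∈ E) (hyy' : (y, y') ∈ E)
    (hy'b : (y', b) ∈ E) (hyb : (y, b) ∈ E) (s : List X) :
    RipsHtpy E (a :: y :: b :: s) (a :: y' :: b :: s) :=
  (ins [a] s y y' b hyy' hy'b hyb).trans (ins [] (b :: s) a y y' hay hyy' hay').symm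

variable {G : SetRel X X} [G.IsSymm]

theorem of_forall₂_cons_cons (hGE : G ⊆ E) (hGG : G ○ G ⊆ E) {u v : List X}
    (huv : List.Forall₂ (fun a b => (a, b) ∈ G) u v) :
    ∀ {c y y' : X}, (y, y') ∈ G → IsEChain G (y :: u) → IsEChain G (y' :: v) → (c, y) ∈ E →
      (c, y') ∈ E → (y :: u).getLast? = (y' :: v).getLast? →
      RipsHtpy E (c :: y :: u) (c :: y' :: v) := by
  induction huv with
  | nil =>
    intro c y y' _ _ _ _ _ hlast
    obtain rfl : y = y' := by simpa using hlast
    exact .refl _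
  | @cons y₂ y₂' u v hy₂ _ ih =>
    intro c y y' hyy' hu hv hcy hcy' hlast
    rw [isEChain_iff_isChain, List.isChain_cons_cons] at hu hv
    have hy'y₂ : (y', y₂) ∈ E := hGG ⟨y, G.symm hyy', hu.1⟩
    refine (replace hcy hcy' (hGE hyy') hy'y₂ (hGE hu.1) u).trans ?_
    exact (ih hy₂ hu.2 hv.2 hy'y₂ (hGE hv.1) (by simpa using hlast)).append_left_s16 [c]

theorem of_forall₂ [G.IsRefl] (hGG : G ○ G ⊆ E) {u v : List X}
    (huv : List.Forall₂ (fun a b => (a, b) ∈ G) u v) (hu : IsEChain G u) (hv : IsEChain G v)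
    (hhead : u.head? = v.head?) (hlast : u.getLast? = v.getLast?) : RipsHtpy E u v := by
  have hGE : G ⊆ E := SetRel.left_subset_comp.trans hGG
  match u, v, huv with
  | [], [], .nil => exact .refl _
  | [c], [c'], .cons _ .nil =>
    obtain rfl : c = c' := by simpa using hhead
    exact .refl _
  | c :: y :: u, c' :: y' :: v, .cons _ (.cons hyy' huv) =>
    obtain rfl : c = c' := by simpa using hhead
    rw [isEChain_iff_isChain, List.isChain_cons_cons] at hu hv
    exact of_forall₂_cons_cons hGE hGG huv hyy' hu.2 hv.2 (hGE hu.1) (hGE hv.1)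
      (by simpa using hlast)

theorem collapse (hGG : G ○ G ⊆ E) {w a b : X} :
    ∀ {l : List X}, (∀ u ∈ a :: (l ++ [b]), (w, u) ∈ G) → RipsHtpy E (a :: (l ++ [b])) [a, b]
  | [], _ => .refl _
  | t :: l, hw => by
    have hE : ∀ u ∈ a :: t :: (l ++ [b]), ∀ u' ∈ a :: t :: (l ++ [b]), (u, u') ∈ E :=
      fun u hu u' hu' => hGG ⟨w, G.symm (hw u hu), hw u' hu'⟩
    obtain ⟨n, m, hnm⟩ := List.exists_cons_of_ne_nil (by simp : l ++ [b] ≠ [])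
    have hdel : RipsHtpy E (a :: t :: (l ++ [b])) (a :: (l ++ [b])) := by
      rw [hnm] at hE ⊢
      exact (ins [] m a t n (hE _ (by simp) _ (by simp)) (hE _ (by simp) _ (by simp))
        (hE _ (by simp) _ (by simp))).symm
    exact hdel.trans (collapse hGG fun u hu =>
      hw u (List.cons_subset_cons a (List.subset_cons_self t _) hu))

theorem collapse_tail [G.IsRefl] (hGG : G ○ G ⊆ E) {χ T : List X} {w y z : X}
    (hχ : χ.getLast? = some y) (hT : T.getLast? = some z) (hwy : (w, y) ∈ G)
    (hwT : ∀ t ∈ T, (w, t) ∈ G) : RipsHtpy E (χ ++ w :: T) (χ ++ [z]) := by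
  obtain ⟨χ, rfl⟩ := List.getLast?_eq_some_iff.1 hχ
  obtain ⟨T, rfl⟩ := List.getLast?_eq_some_iff.1 hT
  have hw : ∀ u ∈ y :: (w :: T ++ [z]), (w, u) ∈ G := by
    rintro u (_ | ⟨_, _ | ⟨_, hu⟩⟩)
    exacts [hwy, G.rfl, hwT u hu]
  simpa using (collapse hGG hw).append_left_s16 χ

end RipsHtpy

theorem eHomotopic_self {R : SetRel X X} {l : List X} {a b : X} (hl : IsEChain R l)
    (ha : l.head? = some a) (hb : l.getLast? = some b) (h2 : 2 ≤ l.length) (haa : (a, a) ∈ R)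
    (hbb : (b, b) ∈ R) : EHomotopic R l l :=
  ⟨a, a, b, b, ha, ha, hb, hb, haa, hbb, (RipsHtpy.concat_getLast hl hb h2 hbb).trans
    (RipsHtpy.cons_head (hl.concat hb hbb)
      (by rwa [List.head?_append_of_ne_nil _ (by rintro rfl; simp at h2)])
      (by simp only [List.length_append, List.length_singleton]; omega) haa)⟩

section Conditions

variable (f : X → Y)

def IsChainLift (H : SetRel X X) (x : X) (δ : List X) (c : List Y) : Prop :=
  IsEChain H δ ∧ δ.head? = some x ∧ δ.map f = c

def HasChainLifting (F H : SetRel X X) : Prop :=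
  ∀ x c, IsEChain (fimg f F) c → c.head? = some (f x) → ∃ δ, IsChainLift f H x δ c

-- Conditions C3 and C2 for a fixed pair of entourages `(E, F)`.
def SameImageChainsClose (F E : SetRel X X) : Prop :=
  ∀ α β : List X, IsEChain F α → IsEChain F β → α.head? = β.head? → α.map f = β.map f →
    List.Forall₂ (fun a b => (a, b) ∈ E) α β

def HomotopicImageChainsHomotopic (F E : SetRel X X) : Prop :=
  ∀ α β : List X, IsEChain F α → IsEChain F β → α.head? = β.head? →
    EHomotopic (fimg f F) (α.map f) (β.map f) → EHomotopic E α β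

variable {f} {F F' H E : SetRel X X}

theorem HasChainLifting.anti (h : HasChainLifting f F H) (hF : F' ⊆ F) :
    HasChainLifting f F' H :=
  fun x c hc => h x c (hc.mono (Set.image_mono hF))

theorem SameImageChainsClose.anti (h : SameImageChainsClose f F E) (hF : F' ⊆ F) :
    SameImageChainsClose f F' E :=
  fun α β hα hβ => h α β (hα.mono hF) (hβ.mono hF)

theorem HasChainLifting.exists_edge (h : HasChainLifting f F H) {a : X} {y : Y}
    (hy : (f a, y) ∈ fimg f F) : ∃ w, (a, w) ∈ H ∧ f w = y := by
  obtain ⟨δ, hδ, hδa, hδf⟩ := h a [f a, y] (by simpa [isEChain_iff_isChain] using hy) rfl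
  rcases δ with _ | ⟨a', _ | ⟨w, _ | _⟩⟩ <;> simp at hδf hδa
  subst hδa
  exact ⟨w, by simpa [isEChain_iff_isChain] using hδ, hδf.2⟩

theorem HasChainLifting.exists_isEChain_concat (hlift : HasChainLifting f F H) [F.IsSymm]
    (hFH : F ⊆ H) [H.IsRefl] {x z : X} {y : Y} {β : List X} (hβ : IsEChain F β)
    (hβx : β.head? = some x) (hβz : β.getLast? = some z) (hy : (y, f z) ∈ fimg f F) :
    ∃ w, (z, w) ∈ H ∧ f w = y ∧ IsEChain H (x :: β ++ [w]) := by
  obtain ⟨w, hzw, hw⟩ := hlift.exists_edge (a := z) (y := y) (by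
    obtain ⟨⟨p, q⟩, hpq, hpq'⟩ := hy
    exact ⟨(q, p), F.symm hpq, by simp_all⟩)
  refine ⟨w, hzw, hw, IsEChain.concat (List.isChain_cons.2 ⟨?_, hβ.mono hFH⟩) ?_ hzw⟩
  · simp [hβx, H.rfl]
  · simp [List.getLast?_cons, hβz]

end Conditions

namespace HomotopicImageChainsHomotopic

variable {f : X → Y} {F E : SetRel X X} [F.IsRefl]

theorem rel_of_concat (h : HomotopicImageChainsHomotopic f F E) {c a b : X} {α β : List X}
    (hα : IsEChain F (c :: (α ++ [a]))) (hβ : IsEChain F (c :: (β ++ [b])))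
    (hmap : (α ++ [a]).map f = (β ++ [b]).map f) :
    (a, b) ∈ E := by
  have hself := eHomotopic_self (hα.map f) (a := f c) (b := f a) (by simp)
    (List.getLast?_eq_some_iff.2 ⟨f c :: α.map f, by simp⟩) (by simp)
    ⟨(c, c), F.rfl, rfl⟩ ⟨(a, a), F.rfl, rfl⟩
  rw [List.map_cons, hmap, ← List.map_cons] at hself
  nth_rw 1 [List.map_cons, ← hmap, ← List.map_cons] at hself
  obtain ⟨_, _, _, _, -, -, ha, hb, -, hab, -⟩ := h _ _ hα hβ rfl hself
  rw [← List.cons_append, List.getLast?_concat, Option.some.injEq] at ha hb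
  exact ha ▸ hb ▸ hab

theorem forall₂_of_cons (h : HomotopicImageChainsHomotopic f F E) {c : X} {α : List X} :
    ∀ {β : List X}, IsEChain F (c :: α) → IsEChain F (c :: β) → α.map f = β.map f →
      List.Forall₂ (fun a b => (a, b) ∈ E) α β := by
  induction α using List.reverseRecOn with
  | nil =>
    intro β _ _ hmap
    obtain rfl := List.map_eq_nil_iff.1 hmap.symm
    exact .nil
  | append_singleton α a ih =>
    intro β hα hβ hmap
    rw [List.map_append, eq_comm, List.map_eq_append_iff] at hmap
    obtain ⟨β, b', rfl, hmap', hb'⟩ := hmap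
    obtain ⟨b, rfl⟩ : ∃ b, b' = [b] := by
      rcases b' with _ | ⟨b, _ | _⟩ <;> simp_all
    exact List.rel_append (ih (hα.prefix ⟨[a], by simp⟩) (hβ.prefix ⟨[b], by simp⟩) hmap'.symm)
      (.cons (h.rel_of_concat hα hβ (by simp_all)) .nil)

theorem sameImageChainsClose [E.IsRefl] (h : HomotopicImageChainsHomotopic f F E) :
    SameImageChainsClose f F E := by
  rintro (_ | ⟨c, α⟩) (_ | ⟨c', β⟩) hα hβ hhead hmap
  · exact .nil
  · simp at hhead
  · simp at hhead
  · obtain rfl : c = c' := by simpa using hhead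
    exact .cons E.rfl (h.forall₂_of_cons hα hβ (by simpa using hmap))

end HomotopicImageChainsHomotopic

section Transport

variable {f : X → Y} {x : X} {E E₁ F₁ H : SetRel X X} {c d e : List Y}

variable (f) in
def LiftsAdjacent (H E₁ E : SetRel X X) (x : X) (c d : List Y) : Prop :=
  ∀ δ δ' z z', IsChainLift f H x δ c → IsChainLift f H x δ' d → δ.getLast? = some z →
    δ'.getLast? = some z' → (z, z') ∈ E₁ ∧
      ∀ s ≠ [], IsEChain E₁ (δ ++ s) → IsEChain E₁ (δ' ++ s) → RipsHtpy E (δ ++ s) (δ' ++ s)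

theorem LiftsAdjacent.symm [E₁.IsSymm] (h : LiftsAdjacent f H E₁ E x c d) :
    LiftsAdjacent f H E₁ E x d c := fun δ δ' z z' hδ hδ' hz hz' =>
  have ⟨hzz', hhtpy⟩ := h δ' δ z' z hδ' hδ hz' hz
  ⟨E₁.symm hzz', fun s hs h₁ h₂ => (hhtpy s hs h₂ h₁).symm⟩

theorem liftsAdjacent_insert (hC3 : SameImageChainsClose f F₁ E₁) [H.IsRefl] (hHH : H ○ H ⊆ F₁)
    (hF₁E₁ : F₁ ⊆ E₁) [E₁.IsRefl] [E₁.IsSymm] (hE₁E : E₁ ○ E₁ ⊆ E) (l₁ l₂ : List Y)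
    (a v b : Y) : LiftsAdjacent f H E₁ E x (l₁ ++ a :: b :: l₂) (l₁ ++ a :: v :: b :: l₂) := by
  rintro δ δ' z z' ⟨hδ, hδx, hδf⟩ ⟨hδ', hδ'x, hδ'f⟩ hz hz'
  obtain ⟨P, r, rfl, hP, hr⟩ := List.map_eq_append_iff.1 hδ'f
  obtain ⟨da, r, rfl, ha, hr⟩ := List.map_eq_cons_iff.1 hr
  obtain ⟨du, r, rfl, -, hr⟩ := List.map_eq_cons_iff.1 hr
  obtain ⟨db, Q, rfl, hb, hQ⟩ := List.map_eq_cons_iff.1 hr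
  have hHF₁ : H ⊆ F₁ := SetRel.left_subset_comp.trans hHH
  have hHE : H ⊆ E := fun _ hp => SetRel.left_subset_comp.trans hE₁E (hF₁E₁ (hHF₁ hp))
  rw [isEChain_iff_isChain, List.isChain_append_cons_cons, List.isChain_cons_cons] at hδ'
  obtain ⟨hPda, hdu, hdb, hdbQ⟩ := hδ'
  have hdadb : (da, db) ∈ F₁ := hHH ⟨du, hdu, hdb⟩
  -- `ε` is the lift of `c` obtained from `δ'` by deleting `du`.
  set ε := P ++ da :: db :: Q with hε
  have hεF₁ : IsEChain F₁ ε := by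
    rw [isEChain_iff_isChain, List.isChain_append_cons_cons]
    exact ⟨hPda.imp fun _ _ h => hHF₁ h, hdadb, hdbQ.imp fun _ _ h => hHF₁ h⟩
  have hεx : ε.head? = some x := by cases P <;> simp_all
  have hclose : List.Forall₂ (fun a b => (a, b) ∈ E₁) δ ε :=
    hC3 _ _ (hδ.mono hHF₁) hεF₁ (hδx.trans hεx.symm) (by simp [hδf, hε, hP, ha, hb, hQ])
  refine ⟨hclose.rel_of_getLast? hz (by simpa [hε] using hz'), fun s hs h₁ h₂ => ?_⟩
  have hδne : δ ≠ [] := by rintro rfl; simp at hδx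
  have hins : RipsHtpy E (ε ++ s) (P ++ da :: du :: db :: Q ++ s) := by
    simpa [hε] using RipsHtpy.ins P (Q ++ s) da du db (hHE hdu) (hHE hdb)
      (SetRel.left_subset_comp.trans hE₁E (hF₁E₁ hdadb))
  refine (RipsHtpy.of_forall₂ hE₁E
    (List.rel_append hclose (List.forall₂_same.2 fun _ _ => E₁.rfl)) h₁ ?_ ?_ ?_).trans hins
  · simpa [hε] using (isEChain_insert_iff (l₁ := P) (l₂ := Q ++ s) (hHF₁.trans hF₁E₁ hdu)
      (hHF₁.trans hF₁E₁ hdb) (hF₁E₁ hdadb)).2 (by simpa using h₂)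
  · rw [List.head?_append_of_ne_nil _ hδne, List.head?_append_of_ne_nil _ (by simp [hε]),
      hδx, hεx]
  · rw [List.getLast?_append_of_ne_nil _ hs, List.getLast?_append_of_ne_nil _ hs]

variable (f) in
def TailTransport (H E₁ E : SetRel X X) (x : X) (c d : List Y) : Prop :=
  ∀ δ T, IsChainLift f H x δ c → T ≠ [] → IsEChain E₁ (δ ++ T) → (∀ t ∈ T, f t ∈ c.getLast?) →
    ∃ δ' T', IsChainLift f H x δ' d ∧ T' ≠ [] ∧ IsEChain E₁ (δ' ++ T') ∧
      (∀ t ∈ T', f t ∈ d.getLast?) ∧ RipsHtpy E (δ ++ T) (δ' ++ T')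

theorem TailTransport.rfl : TailTransport f H E₁ E x c c :=
  fun δ T hδ hT hδT hTc => ⟨δ, T, hδ, hT, hδT, hTc, .refl _⟩

theorem TailTransport.trans (h₁ : TailTransport f H E₁ E x c d)
    (h₂ : TailTransport f H E₁ E x d e) : TailTransport f H E₁ E x c e := by
  intro δ T hδ hT hδT hTc
  obtain ⟨δ', T', hδ', hT', hδT', hTd, hh⟩ := h₁ δ T hδ hT hδT hTc
  obtain ⟨δ'', T'', hδ'', hT'', hδT'', hTe, hh'⟩ := h₂ δ' T' hδ' hT' hδT' hTd
  exact ⟨δ'', T'', hδ'', hT'', hδT'', hTe, hh.trans hh'⟩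

theorem LiftsAdjacent.tailTransport {F : SetRel X X} [E₁.IsRefl] [E₁.IsSymm] (hE₁E : E₁ ⊆ E)
    (hHE₁ : H ⊆ E₁) (hlift : HasChainLifting f F H) (hadj : LiftsAdjacent f H E₁ E x c d)
    (hd : IsEChain (fimg f F) d) (hhead : c.head? = d.head?) (hlast : c.getLast? = d.getLast?) :
    TailTransport f H E₁ E x c d := by
  rintro δ T hδ hT hδT hTc
  obtain ⟨δ', hδ'⟩ := hlift x d hd (by rw [← hhead, ← hδ.2.2, List.head?_map, hδ.2.1]; rfl)
  have hne : ∀ {γ b}, IsChainLift f H x γ b → γ ≠ [] := by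
    rintro _ _ ⟨-, hγ, -⟩ rfl
    simp at hγ
  obtain ⟨D, z, rfl⟩ := (List.eq_nil_or_concat' δ).resolve_left (hne hδ)
  obtain ⟨D', z', rfl⟩ := (List.eq_nil_or_concat' δ').resolve_left (hne hδ')
  obtain ⟨t, T, rfl⟩ := List.exists_cons_of_ne_nil hT
  obtain ⟨hzz', hladder⟩ := hadj _ _ z z' hδ hδ' (by simp) (by simp)
  rw [isEChain_iff_isChain, List.append_assoc, List.singleton_append,
    List.isChain_append_cons_cons] at hδT
  obtain ⟨hDz, hzt, htT⟩ := hδT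
  have hzT : (z :: t :: T).IsChain fun a b => (a, b) ∈ E₁ := List.isChain_cons_cons.2 ⟨hzt, htT⟩
  have hchain : ∀ {D : List X} {y : X}, IsEChain E₁ (D ++ [y]) → (y, z) ∈ E₁ →
      IsEChain E₁ (D ++ [y] ++ z :: t :: T) := fun hD hyz => by
    rw [isEChain_iff_isChain, List.append_assoc, List.singleton_append,
      List.isChain_append_cons_cons]
    exact ⟨hD, hyz, hzT⟩
  have hpad : RipsHtpy E (D ++ [z] ++ t :: T) (D ++ [z] ++ z :: t :: T) := by
    simpa using RipsHtpy.ins D T z z t (hE₁E E₁.rfl) (hE₁E hzt) (hE₁E hzt)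
  refine ⟨D' ++ [z'], z :: t :: T, hδ', List.cons_ne_nil _ _, hchain (hδ'.1.mono hHE₁)
    (E₁.symm hzz'), ?_, hpad.trans (hladder _ (List.cons_ne_nil _ _) (hchain hDz E₁.rfl)
      (hchain (hδ'.1.mono hHE₁) (E₁.symm hzz')))⟩
  rintro u (_ | ⟨_, hu⟩)
  · rw [← hlast, ← hδ.2.2]
    simp
  · rw [← hlast]
    exact hTc u hu

theorem tailTransport_of_ripsHtpy {F : SetRel X X} [E₁.IsRefl] [E₁.IsSymm] (hE₁E : E₁ ⊆ E)
    (hHE₁ : H ⊆ E₁) (hlift : HasChainLifting f F H)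
    (hadj : ∀ l₁ l₂ a v b, LiftsAdjacent f H E₁ E x (l₁ ++ a :: b :: l₂) (l₁ ++ a :: v :: b :: l₂))
    (h : RipsHtpy (fimg f F) c d) :
    IsEChain (fimg f F) c → TailTransport f H E₁ E x c d ∧ TailTransport f H E₁ E x d c := by
  induction h with
  | refl => exact fun _ => ⟨.rfl, .rfl⟩
  | symm h ih => exact fun hc => (ih (h.isEChain_iff.2 hc)).symm
  | trans h₁ _ ih₁ ih₂ =>
    intro hc
    obtain ⟨h₁₂, h₂₁⟩ := ih₁ hc
    obtain ⟨h₂₃, h₃₂⟩ := ih₂ (h₁.isEChain_iff.1 hc)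
    exact ⟨h₁₂.trans h₂₃, h₃₂.trans h₂₁⟩
  | ins l₁ l₂ a v b hav hvb hab =>
    intro hc
    have hhead : (l₁ ++ a :: b :: l₂).head? = (l₁ ++ a :: v :: b :: l₂).head? := by
      cases l₁ <;> rfl
    have hlast : (l₁ ++ a :: b :: l₂).getLast? = (l₁ ++ a :: v :: b :: l₂).getLast? := by simp
    exact ⟨(hadj l₁ l₂ a v b).tailTransport hE₁E hHE₁ hlift
        ((isEChain_insert_iff hav hvb hab).1 hc) hhead hlast,
      (hadj l₁ l₂ a v b).symm.tailTransport hE₁E hHE₁ hlift hc hhead.symm hlast.symm⟩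

end Transport

theorem SameImageChainsClose.ripsHtpy_append {f : X → Y} {E₁ E₂ E : SetRel X X}
    (hC3 : SameImageChainsClose f E₁ E₂) [E₁.IsRefl] (hE₁E₂ : E₁ ⊆ E₂) [E₂.IsSymm]
    (hE₂E : E₂ ○ E₂ ⊆ E) {δ χ T : List X} {w : X} (hδT : IsEChain E₁ (δ ++ T))
    (hχ : IsEChain E₁ (χ ++ [w])) (hhead : δ.head? = (χ ++ [w]).head?)
    (hmap : δ.map f = (χ ++ [w]).map f) (hT : T ≠ []) (hTw : ∀ t ∈ T, f t = f w) :
    (∀ t ∈ T, (w, t) ∈ E₂) ∧ RipsHtpy E (δ ++ T) (χ ++ w :: T) := by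
  have : E₂.IsRefl := SetRel.isRefl_mono hE₁E₂
  have hδne : δ ≠ [] := by rintro rfl; simp at hhead
  have hlen : δ.length = (χ ++ [w]).length := by simpa using congrArg List.length hmap
  have hheads : (δ ++ T).head? = (χ ++ [w] ++ T).head? := by
    rw [List.head?_append_of_ne_nil _ hδne, List.head?_append_of_ne_nil _ (by simp), hhead]
  have hTE₁ : IsEChain E₁ T := (List.isChain_append.1 hδT).2.1
  -- Comparing `δ ++ T` with `χ ++ [w] ++ [w, …, w]` shows that `T` stays near `w`.
  have hclose := hC3 (δ ++ T) (χ ++ [w] ++ T.map fun _ => w) hδT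
    (by
      rw [isEChain_iff_isChain, List.isChain_append]
      refine ⟨hχ, List.isChain_map_of_isChain _ (fun _ _ _ => E₁.rfl) hTE₁, ?_⟩
      rintro a ha b hb
      simp only [List.getLast?_concat, Option.mem_def, Option.some.injEq, List.head?_map,
        Option.map_eq_some_iff] at ha hb
      obtain ⟨_, -, rfl⟩ := hb
      exact ha ▸ E₁.rfl)
    (by rw [hheads, List.head?_append_of_ne_nil (χ ++ [w]) (by simp),
      List.head?_append_of_ne_nil (χ ++ [w]) (by simp)])
    (by simp [hmap, List.map_congr_left hTw])
  have hδχ := List.forall₂_take_append _ _ _ hclose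
  rw [← hlen, List.take_left] at hδχ
  have hTw' := List.forall₂_drop_append _ _ _ hclose
  rw [← hlen, List.drop_left, List.forall₂_map_right_iff, List.forall₂_same] at hTw'
  have hwT : ∀ t ∈ T, (w, t) ∈ E₂ := fun t ht => E₂.symm (hTw' t ht)
  refine ⟨hwT, ?_⟩
  have hχT : IsEChain E₂ (χ ++ [w] ++ T) := by
    rw [isEChain_iff_isChain, List.isChain_append]
    refine ⟨hχ.mono hE₁E₂, hTE₁.mono hE₁E₂, ?_⟩
    simpa using fun t ht => hwT t (List.mem_of_mem_head? ht)
  simpa using RipsHtpy.of_forall₂ hE₂E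
    (List.rel_append hδχ (List.forall₂_same.2 fun _ _ => E₂.rfl)) (hδT.mono hE₁E₂) hχT hheads
    (by rw [List.getLast?_append_of_ne_nil _ hT, List.getLast?_append_of_ne_nil _ hT])

theorem homotopicImageChainsHomotopic_of_sameImageChainsClose {f : X → Y}
    {F H F₁ E₁ E₂ E : SetRel X X} (hlift : HasChainLifting f F H) [F.IsSymm] (hFH : F ⊆ H)
    [H.IsRefl] (hHH : H ○ H ⊆ F₁) (hF₁ : SameImageChainsClose f F₁ E₁) (hF₁E₁ : F₁ ⊆ E₁)
    [E₁.IsRefl] [E₁.IsSymm] (hE₁ : SameImageChainsClose f E₁ E₂) (hE₁E₂ : E₁ ⊆ E₂)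
    [E₂.IsSymm] (hE₂E : E₂ ○ E₂ ⊆ E) : HomotopicImageChainsHomotopic f F E := by
  rintro α β hα hβ hhead ⟨_, _, _, _, hαx, -, hαy, hβy, -, hyy, hhtpy⟩
  simp only [List.head?_map, List.getLast?_map, Option.map_eq_some_iff] at hαx hαy hβy
  obtain ⟨x, hx, rfl⟩ := hαx
  obtain ⟨yα, hyα, rfl⟩ := hαy
  obtain ⟨yβ, hyβ, rfl⟩ := hβy
  have : E₂.IsRefl := SetRel.isRefl_mono hE₁E₂
  have hHE₁ : H ⊆ E₁ := (SetRel.left_subset_comp.trans hHH).trans hF₁E₁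
  have hE₁E : E₁ ○ E₁ ⊆ E := (SetRel.comp_subset_comp hE₁E₂ hE₁E₂).trans hE₂E
  have hE₁E' : E₁ ⊆ E := SetRel.left_subset_comp.trans hE₁E
  have hβx : β.head? = some x := hhead ▸ hx
  -- The lift `x :: β ++ [w]` of the target chain.
  obtain ⟨w, hyβw, hw, hχ⟩ := hlift.exists_isEChain_concat hFH hβ hβx hyβ hyy
  have hτ : (f x :: (β.map f ++ [f yα])).getLast? = some (f yα) :=
    List.getLast?_eq_some_iff.2 ⟨f x :: β.map f, by simp⟩
  have h2 : 2 ≤ α.length := by simpa using hhtpy.two_le_length_iff.2 (by simp)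
  -- Transport `α ++ [yα]` along the homotopy to a lift `δ` of the target followed by a tail `T`.
  obtain ⟨δ, T, ⟨-, hδx, hδf⟩, hT, hδT, hTf, hαδ⟩ :=
    (tailTransport_of_ripsHtpy hE₁E' hHE₁ hlift (liftsAdjacent_insert hF₁ hHH hF₁E₁ hE₁E) hhtpy
      (hα.map f)).1 α [yα] ⟨hα.mono hFH, hx, rfl⟩ (List.cons_ne_nil _ _)
      ((hα.mono (hFH.trans hHE₁)).concat hyα E₁.rfl) (by simp [List.getLast?_map, hyα])
  obtain ⟨hwT, hδχ⟩ := hE₁.ripsHtpy_append hE₁E₂ hE₂E hδT (hχ.mono hHE₁) (by simp [hδx])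
    (by simp [hδf, hw]) hT (fun t ht => by rw [hw]; simpa [hτ, eq_comm] using hTf t ht)
  have hTy : T.getLast? = some yα := by
    rw [← List.getLast?_append_of_ne_nil δ hT, ← hαδ.getLast?_eq]
    simp
  have hwβ : (w, yβ) ∈ E₂ := E₂.symm (hE₁E₂ (hHE₁ hyβw))
  refine ⟨x, x, yα, yβ, hx, hβx, hyα, hyβ, hE₁E' E₁.rfl,
    hE₂E ⟨w, E₂.symm (hwT yα (List.mem_of_getLast? hTy)), hwβ⟩, ?_⟩
  have hxβ : (x :: β).getLast? = some yβ := by simp [List.getLast?_cons, hyβ]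
  exact (RipsHtpy.concat_getLast (hα.mono (hFH.trans (hHE₁.trans hE₁E'))) hyα h2
    (hE₁E' E₁.rfl)).trans (hαδ.trans (hδχ.trans (RipsHtpy.collapse_tail hE₂E hxβ hTy hwβ hwT)))

/-- If `f` has the chain lifting property then condition C2 (approximate uniqueness of
chain lifts up to `E`-homotopy) is equivalent to condition C3 (chains with identical
images are `E`-close). -/
theorem C2_iff_C3 [UniformSpace X] (f : X → Y)
    (hc1 : ∀ E ∈ 𝓤 X, ∃ F ∈ 𝓤 X, ∀ x : X, ∀ l : List Y,
        IsEChain (fimg f F) l → l.head? = some (f x) →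
        ∃ l' : List X, IsEChain E l' ∧ l'.head? = some x ∧ l'.map f = l) :
    (∀ E ∈ 𝓤 X, ∃ F ∈ 𝓤 X, ∀ α β : List X,
        IsEChain F α → IsEChain F β → α.head? = β.head? →
        EHomotopic (fimg f F) (α.map f) (β.map f) → EHomotopic E α β) ↔
      (∀ E ∈ 𝓤 X, ∃ F ∈ 𝓤 X, ∀ α β : List X,
        IsEChain F α → IsEChain F β → α.head? = β.head? →
        α.map f = β.map f → List.Forall₂ (fun a b => (a, b) ∈ E) α β) := by
  constructor
  · intro hC2 E hE
    obtain ⟨F, hF, hFE⟩ := hC2 E hE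
    have := isRefl_of_mem_uniformity hF
    have := isRefl_of_mem_uniformity hE
    exact ⟨F, hF, HomotopicImageChainsHomotopic.sameImageChainsClose hFE⟩
  · intro hC3 E hE
    obtain ⟨E₂, hE₂, _, hE₂E⟩ := comp_symm_mem_uniformity_sets hE
    obtain ⟨E₁', hE₁', hE₁'E₂⟩ := hC3 E₂ hE₂
    have hE₁ := symmetrize_mem_uniformity (inter_mem hE₁' hE₂)
    have := isRefl_of_mem_uniformity hE₁
    obtain ⟨F₁, hF₁, hF₁E₁⟩ := hC3 _ hE₁
    obtain ⟨H, hH, hHH⟩ := comp_mem_uniformity_sets (inter_mem hF₁ hE₁)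
    have := isRefl_of_mem_uniformity hH
    obtain ⟨F, hF, hFH⟩ := hc1 H hH
    refine ⟨_, symmetrize_mem_uniformity (inter_mem hF hH), ?_⟩
    exact homotopicImageChainsHomotopic_of_sameImageChainsClose
      (HasChainLifting.anti hFH (SetRel.symmetrize_subset_self.trans Set.inter_subset_left))
      (SetRel.symmetrize_subset_self.trans Set.inter_subset_right) hHH
      (SameImageChainsClose.anti hF₁E₁ Set.inter_subset_left) Set.inter_subset_right
      (SameImageChainsClose.anti hE₁'E₂ (SetRel.symmetrize_subset_self.trans Set.inter_subset_left))
      (SetRel.symmetrize_subset_self.trans Set.inter_subset_right) hE₂E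
end
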